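/- arXiv:1604.00454 — 15 statements merged into one kernel-verified Lean document; each statement's English description precedes it below -/
import Mathlib

section
/- Consider the code C of Construction 1. For every node index i ∈ {1,…,n} and any two codewords (C_1,…,C_n) and (C'_1,…,C'_n) in C, if for every j ≠ i and every digit string a one has ∑_{u=0}^{r−1} c_{j,a(i,u)} = ∑_{u=0}^{r−1} c'_{j,a(i,u)}, then C_i = C'_i. (Thus node i is recoverable from one field symbol per helper node per group of r coordinates, i.e., from (n−1)l/r symbols in total, which meets the cut-set lower bound for repairing one node from all n−1 survivors.) -/
/-- Construction 1 (diagonal MSR code): any single node `i` is determined by the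
group sums `∑_{u} c_{j,a(i,u)}` from each surviving node `j ≠ i`. -/
theorem construction1_single_node_optimal_repair
    (F : Type*) [Field F] (n r : ℕ) (hr : 1 ≤ r) (hrn : r < n)
    (lam : Fin n → Fin r → F)
    (hdist : Function.Injective fun p : Fin n × Fin r => lam p.1 p.2)
    (C C' : Fin n → (Fin n → Fin r) → F)
    (hC : ∀ t < r, ∀ a : Fin n → Fin r, ∑ i, lam i (a i) ^ t * C i a = 0)
    (hC' : ∀ t < r, ∀ a : Fin n → Fin r, ∑ i, lam i (a i) ^ t * C' i a = 0)
    (i : Fin n)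
    (hrep : ∀ j : Fin n, j ≠ i → ∀ a : Fin n → Fin r,
      ∑ u : Fin r, C j (Function.update a i u) =
      ∑ u : Fin r, C' j (Function.update a i u)) :
    C i = C' i := by
  funext a
  set D : Fin n → (Fin n → Fin r) → F := fun j b => C j b - C' j b with hD
  have hparity : ∀ t < r, ∀ b : Fin n → Fin r,
      ∑ j, lam j (b j) ^ t * D j b = 0 := by
    intro t ht b
    have := hC t ht b
    have := hC' t ht b
    simp only [hD, mul_sub, Finset.sum_sub_distrib]
    rw [hC t ht b, hC' t ht b, sub_zero]
  have hrep0 : ∀ j : Fin n, j ≠ i →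
      ∑ u : Fin r, D j (Function.update a i u) = 0 := by
    intro j hj
    simp only [hD, Finset.sum_sub_distrib, hrep j hj a, sub_self]
  have key : ∀ t : Fin r,
      ∑ u : Fin r, lam i u ^ (t : ℕ) * D i (Function.update a i u) = 0 := by
    intro t
    have h1 : ∑ u : Fin r, ∑ j,
        lam j (Function.update a i u j) ^ (t : ℕ) * D j (Function.update a i u) = 0 := by
      simp [hparity (t : ℕ) t.2]
    rw [Finset.sum_comm] at h1
    rw [Finset.sum_eq_single i] at h1
    · simpa using h1
    · intro j _ hj
      have : ∀ u : Fin r, Function.update a i u j = a j := fun u =>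
        Function.update_of_ne hj _ _
      calc ∑ u : Fin r, lam j (Function.update a i u j) ^ (t : ℕ) * D j (Function.update a i u)
          = lam j (a j) ^ (t : ℕ) * ∑ u : Fin r, D j (Function.update a i u) := by
            rw [Finset.mul_sum]; exact Finset.sum_congr rfl fun u _ => by rw [this u]
        _ = 0 := by rw [hrep0 j hj, mul_zero]
    · intro h; exact absurd (Finset.mem_univ i) h
  -- Vandermonde
  have hinj : Function.Injective (lam i) := fun u v huv => by
    have := hdist (a₁ := (i, u)) (a₂ := (i, v)) (by simpa using huv)
    simpa using this
  set M : Matrix (Fin r) (Fin r) F := (Matrix.vandermonde (lam i)).transpose with hM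
  have hdet : M.det ≠ 0 := by
    rw [hM, Matrix.det_transpose, Matrix.det_vandermonde]
    refine Finset.prod_ne_zero_iff.2 fun u _ => Finset.prod_ne_zero_iff.2 fun v hv => ?_
    exact sub_ne_zero.2 fun h => absurd (hinj h).symm (ne_of_lt (Finset.mem_Ioi.mp hv))
  set x : Fin r → F := fun u => D i (Function.update a i u) with hx
  have hmv : M.mulVec x = 0 := by
    funext t
    simp only [Matrix.mulVec, dotProduct, hM, Matrix.transpose_apply,
      Matrix.vandermonde_apply, Pi.zero_apply]
    exact key t
  have hx0 : x = 0 := Matrix.eq_zero_of_mulVec_eq_zero hdet hmv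
  have : D i a = 0 := by
    have := congrFun hx0 (a i)
    simpa [hx, Function.update_eq_self] using this
  have := sub_eq_zero.mp this
  simpa [hD] using this
end

section
/- The code C of Construction 1 is MDS: for every subset S ⊆ {1,…,n} with |S| = k, any two codewords (C_1,…,C_n) and (C'_1,…,C'_n) in C satisfying C_j = C'_j for all j ∈ S are equal, i.e., any k of the n nodes determine the entire codeword. -/
/-- Construction 1 is MDS: any `k = n - r` nodes determine the whole codeword. -/
theorem construction1_is_MDS
    (F : Type*) [Field F] (n r : ℕ) (hr : 1 ≤ r) (hrn : r < n)
    (lam : Fin n → Fin r → F)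
    (hdist : Function.Injective fun p : Fin n × Fin r => lam p.1 p.2)
    (C C' : Fin n → (Fin n → Fin r) → F)
    (hC : ∀ t < r, ∀ a : Fin n → Fin r, ∑ i, lam i (a i) ^ t * C i a = 0)
    (hC' : ∀ t < r, ∀ a : Fin n → Fin r, ∑ i, lam i (a i) ^ t * C' i a = 0)
    (S : Finset (Fin n)) (hS : S.card = n - r)
    (heq : ∀ j ∈ S, C j = C' j) :
    C = C' := by
  have hSc : Sᶜ.card = r := by
    rw [Finset.card_compl, hS, Fintype.card_fin]
    omega
  funext i a
  by_cases hi : i ∈ S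
  · exact congrFun (heq i hi) a
  · set e : {x // x ∈ Sᶜ} ≃ Fin r := Sᶜ.equivFinOfCardEq hSc with he
    set x : Fin r → F := fun u => lam (e.symm u : Fin n) (a (e.symm u)) with hxdef
    set d : Fin r → F := fun u => C (e.symm u : Fin n) a - C' (e.symm u : Fin n) a with hddef
    have hx : Function.Injective x := by
      intro u v huv
      have h2 : ((e.symm u : Fin n), a (e.symm u : Fin n))
          = ((e.symm v : Fin n), a (e.symm v : Fin n)) := hdist huv
      have h3 : (e.symm u : Fin n) = (e.symm v : Fin n) := congrArg Prod.fst h2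
      have : e.symm u = e.symm v := Subtype.ext h3
      exact e.symm.injective this
    have hsum : ∀ t : Fin r, ∑ u, d u * x u ^ (t : ℕ) = 0 := by
      intro t
      have h1 := hC t t.2 a
      have h2 := hC' t t.2 a
      have h3 : ∑ j, lam j (a j) ^ (t : ℕ) * (C j a - C' j a) = 0 := by
        simp only [mul_sub, Finset.sum_sub_distrib, h1, h2, sub_zero]
      have h4 : ∑ j ∈ Sᶜ, lam j (a j) ^ (t : ℕ) * (C j a - C' j a) = 0 := by
        rw [← h3]
        apply Finset.sum_subset (Finset.subset_univ _)
        intro j _ hj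
        rw [Finset.mem_compl, not_not] at hj
        rw [heq j hj]
        ring
      calc ∑ u, d u * x u ^ (t : ℕ)
          = ∑ u : Fin r, (fun j : {y // y ∈ Sᶜ} =>
              lam (j : Fin n) (a j) ^ (t : ℕ) * (C (j : Fin n) a - C' (j : Fin n) a)) (e.symm u) :=
            Finset.sum_congr rfl fun u _ => by rw [hddef, hxdef]; ring
        _ = ∑ j : {y // y ∈ Sᶜ}, lam (j : Fin n) (a j) ^ (t : ℕ) * (C (j : Fin n) a - C' (j : Fin n) a) :=
            by exact Equiv.sum_comp e.symm fun j => lam (j : Fin n) (a j) ^ (t : ℕ) * (C (j : Fin n) a - C' (j : Fin n) a)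
        _ = ∑ j ∈ Sᶜ, lam j (a j) ^ (t : ℕ) * (C j a - C' j a) := by
            rw [← Finset.sum_coe_sort Sᶜ (fun j => lam j (a j) ^ (t : ℕ) * (C j a - C' j a))]
        _ = 0 := h4
    have hd0 : d = 0 := Matrix.eq_zero_of_forall_pow_sum_mul_pow_eq_zero hx hsum
    have hiSc : i ∈ Sᶜ := Finset.mem_compl.mpr hi
    have := congrFun hd0 (e ⟨i, hiSc⟩)
    simp only [hddef, Equiv.symm_apply_apply, Pi.zero_apply] at this
    exact sub_eq_zero.mp this
end

section
/- The code C of Construction 2 is MDS: for every subset S ⊆ {1,…,n} with |S| = k, any two codewords (C_1,…,C_n) and (C'_1,…,C'_n) in C satisfying C_j = C'_j for all j ∈ S are equal. -/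
/-- Construction 2 (diagonal code with `s = d + 1 - k` values per digit) is MDS. -/
theorem construction2_is_MDS
    (F : Type*) [Field F] (n r d s : ℕ) (hr : 1 ≤ r) (hrn : r < n)
    (hd1 : n - r ≤ d) (hd2 : d ≤ n - 1) (hs : s = d + 1 - (n - r))
    (lam : Fin n → Fin s → F)
    (hdist : Function.Injective fun p : Fin n × Fin s => lam p.1 p.2)
    (C C' : Fin n → (Fin n → Fin s) → F)
    (hC : ∀ t < r, ∀ a : Fin n → Fin s, ∑ i, lam i (a i) ^ t * C i a = 0)
    (hC' : ∀ t < r, ∀ a : Fin n → Fin s, ∑ i, lam i (a i) ^ t * C' i a = 0)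
    (S : Finset (Fin n)) (hS : S.card = n - r)
    (heq : ∀ j ∈ S, C j = C' j) :
    C = C' := by
  -- complement has cardinality r
  have hcard : Sᶜ.card = r := by
    rw [Finset.card_compl, hS, Fintype.card_fin]
    omega
  funext i a
  by_cases hi : i ∈ S
  · exact congrFun (heq i hi) a
  -- difference vector
  set D : Fin n → F := fun j => C j a - C' j a with hD
  -- parity checks for D restricted to Sᶜ
  have hsum : ∀ t < r, ∑ j ∈ Sᶜ, lam j (a j) ^ t * D j = 0 := by
    intro t ht
    have h1 := hC t ht a
    have h2 := hC' t ht a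
    have hsplit : ∑ j, lam j (a j) ^ t * D j = 0 := by
      simp only [hD, mul_sub, Finset.sum_sub_distrib, h1, h2, sub_zero]
    rw [← hsplit]
    rw [← Finset.sum_compl_add_sum Sᶜ (fun j => lam j (a j) ^ t * D j)]
    simp only [compl_compl]
    have : ∑ j ∈ S, lam j (a j) ^ t * D j = 0 := by
      apply Finset.sum_eq_zero
      intro j hj
      simp [hD, congrFun (heq j hj) a]
    rw [this, zero_add]
  -- index Sᶜ by Fin r
  have e : Fin r ≃ {x // x ∈ Sᶜ} := (Sᶜ.equivFin.trans (finCongr hcard)).symm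
  have hinj : Function.Injective fun j : Fin r => lam (e j).1 (a (e j).1) := by
    intro j₁ j₂ h
    have : ((e j₁).1, a (e j₁).1) = ((e j₂).1, a (e j₂).1) := hdist h
    have h1 : (e j₁).1 = (e j₂).1 := (Prod.mk.injEq _ _ _ _ ▸ this).1
    exact e.injective (Subtype.ext h1)
  have hz : (fun j : Fin r => D (e j).1) = 0 := by
    apply Matrix.eq_zero_of_forall_pow_sum_mul_pow_eq_zero hinj
    intro t
    calc ∑ j : Fin r, D (e j).1 * lam (e j).1 (a (e j).1) ^ (t : ℕ)
        = ∑ x : {x // x ∈ Sᶜ}, D x.1 * lam x.1 (a x.1) ^ (t : ℕ) :=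
          Equiv.sum_comp e (fun x : {x // x ∈ Sᶜ} => D x.1 * lam x.1 (a x.1) ^ (t : ℕ))
      _ = ∑ j ∈ Sᶜ, D j * lam j (a j) ^ (t : ℕ) :=
          Finset.sum_attach Sᶜ (fun j => D j * lam j (a j) ^ (t : ℕ))
      _ = 0 := by simpa [mul_comm] using hsum t.1 t.2
  have hiD : D i = 0 := by
    have hiC : i ∈ Sᶜ := Finset.mem_compl.mpr hi
    have := congrFun hz (e.symm ⟨i, hiC⟩)
    simpa using this
  exact sub_eq_zero.mp hiD
end

section
/- Let (C_1,…,C_n) be a codeword of Construction 2 and assume d ≤ n − 2 (so r − s ≥ 1). Fix any digit string a and set μ_j = ∑_{u=0}^{s−1} c_{j,a(1,u)} for j = 2,…,n, and let p_0(x) = ∏_{u=0}^{s−1}(x − λ_{1,u}). Then for every integer m with 0 ≤ m ≤ r − s − 1, one has ∑_{j=2}^n λ_{j,a_j}^m · p_0(λ_{j,a_j}) · μ_j = 0. (Hence the vector (μ_2,…,μ_n) lies in a Generalized Reed–Solomon code of length n−1 and dimension d with evaluation points λ_{j,a_j} and nonzero multipliers p_0(λ_{j,a_j}).) -/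
open Polynomial Finset

/-- For a codeword of Construction 2 with `d ≤ n - 2`, the group sums
`μ_j = ∑_u c_{j,a(1,u)}` satisfy the GRS parity relations
`∑_{j≠1} λ_{j,a_j}^m · p_0(λ_{j,a_j}) · μ_j = 0` for `0 ≤ m ≤ r - s - 1`,
where `p_0(x) = ∏_u (x - λ_{1,u})`. -/
theorem construction2_group_sums_form_GRS
    (F : Type*) [Field F] (n r d s : ℕ) (hr : 1 ≤ r) (hrn : r < n)
    (hd1 : n - r ≤ d) (hd2 : d ≤ n - 2) (hs : s = d + 1 - (n - r))
    (lam : Fin n → Fin s → F)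
    (hdist : Function.Injective fun p : Fin n × Fin s => lam p.1 p.2)
    (C : Fin n → (Fin n → Fin s) → F)
    (hC : ∀ t < r, ∀ a : Fin n → Fin s, ∑ i, lam i (a i) ^ t * C i a = 0)
    (a : Fin n → Fin s) (m : ℕ) (hm : m ≤ r - s - 1) :
    ∑ j ∈ Finset.univ.filter (fun j : Fin n => j ≠ ⟨0, by omega⟩),
      lam j (a j) ^ m * (∏ u : Fin s, (lam j (a j) - lam ⟨0, by omega⟩ u)) *
        (∑ u : Fin s, C j (Function.update a ⟨0, by omega⟩ u)) = 0 := by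
  set z : Fin n := ⟨0, by omega⟩ with hz
  have hsr : s + m < r := by omega
  have key : ∀ (P : F[X]), P.natDegree < r → ∀ b : Fin n → Fin s,
      ∑ i, P.eval (lam i (b i)) * C i b = 0 := by
    intro P hP b
    have h1 : ∀ i : Fin n, P.eval (lam i (b i))
        = ∑ t ∈ Finset.range r, P.coeff t * lam i (b i) ^ t := fun i =>
      Polynomial.eval_eq_sum_range' hP _
    calc ∑ i, P.eval (lam i (b i)) * C i b
        = ∑ i, ∑ t ∈ Finset.range r, P.coeff t * (lam i (b i) ^ t * C i b) := by
          simp_rw [h1, Finset.sum_mul, mul_assoc]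
      _ = ∑ t ∈ Finset.range r, P.coeff t * ∑ i, lam i (b i) ^ t * C i b := by
          rw [Finset.sum_comm]; simp_rw [Finset.mul_sum]
      _ = 0 := by
          apply Finset.sum_eq_zero; intro t ht
          rw [hC t (Finset.mem_range.mp ht) b, mul_zero]
  set P : F[X] := X ^ m * ∏ u : Fin s, (X - Polynomial.C (lam z u)) with hP
  have hmon : (∏ u : Fin s, (X - Polynomial.C (lam z u))).Monic :=
    monic_prod_of_monic _ _ fun u _ => monic_X_sub_C _
  have hdeg : P.natDegree < r := by
    have hdeg' : P.natDegree = m + s := by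
      rw [hP, (monic_X_pow m).natDegree_mul hmon, natDegree_X_pow,
        Polynomial.natDegree_prod_of_monic _ _ fun u _ => monic_X_sub_C _]
      simp [natDegree_X_sub_C]
    omega
  have hevalz : ∀ u : Fin s, Polynomial.eval (lam z u) P = 0 := by
    intro u
    rw [hP]
    simp only [eval_mul, eval_pow, eval_X, eval_prod, eval_sub, eval_C]
    rw [Finset.prod_eq_zero (Finset.mem_univ u) (by ring)]
    ring
  have heval : ∀ x : F, Polynomial.eval x P = x ^ m * ∏ u : Fin s, (x - lam z u) := by
    intro x; rw [hP]; simp [eval_prod]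
  rw [Finset.filter_ne']
  have main : ∑ u : Fin s, ∑ i, Polynomial.eval (lam i (Function.update a z u i)) P
      * C i (Function.update a z u) = 0 :=
    Finset.sum_eq_zero fun u _ => key P hdeg _
  rw [Finset.sum_comm] at main
  rw [← Finset.sum_erase_add _ _ (Finset.mem_univ z)] at main
  have hzterm : ∑ u : Fin s, Polynomial.eval (lam z (Function.update a z u z)) P
      * C z (Function.update a z u) = 0 := by
    apply Finset.sum_eq_zero; intro u _
    rw [Function.update_self, hevalz, zero_mul]
  rw [hzterm, add_zero] at main
  calc ∑ j ∈ univ.erase z,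
        lam j (a j) ^ m * (∏ u : Fin s, (lam j (a j) - lam z u)) *
          ∑ u : Fin s, C j (Function.update a z u)
      = ∑ j ∈ univ.erase z, ∑ u : Fin s,
          Polynomial.eval (lam j (Function.update a z u j)) P * C j (Function.update a z u) := by
        apply Finset.sum_congr rfl; intro j hj
        have hjz : j ≠ z := Finset.ne_of_mem_erase hj
        rw [Finset.mul_sum]
        apply Finset.sum_congr rfl; intro u _
        rw [Function.update_of_ne hjz, heval]
    _ = 0 := main
end

section
/- The code C of Construction 2 has the d-optimal repair property (erasure-only case): for every node index i ∈ {1,…,n} and every subset R ⊆ {1,…,n}∖{i} with |R| = d, any two codewords (C_1,…,C_n) and (C'_1,…,C'_n) in C satisfying ∑_{u=0}^{s−1} c_{j,a(i,u)} = ∑_{u=0}^{s−1} c'_{j,a(i,u)} for every j ∈ R and every digit string a, also satisfy C_i = C'_i. (Thus node i is recoverable from dl/s = dl/(d+1−k) field symbols downloaded from any d helper nodes.) -/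
open Finset

/-- Construction 2 has the `d`-optimal repair property (erasure-only case):
node `i` is determined by the group sums `∑_{u=0}^{s-1} c_{j,a(i,u)}`
downloaded from any `d` helper nodes `j ∈ R`. -/
theorem construction2_d_optimal_repair
    (F : Type*) [Field F] (n r d s : ℕ) (hr : 1 ≤ r) (hrn : r < n)
    (hd1 : n - r ≤ d) (hd2 : d ≤ n - 1) (hs : s = d + 1 - (n - r))
    (lam : Fin n → Fin s → F)
    (hdist : Function.Injective fun p : Fin n × Fin s => lam p.1 p.2)
    (C C' : Fin n → (Fin n → Fin s) → F)
    (hC : ∀ t < r, ∀ a : Fin n → Fin s, ∑ i, lam i (a i) ^ t * C i a = 0)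
    (hC' : ∀ t < r, ∀ a : Fin n → Fin s, ∑ i, lam i (a i) ^ t * C' i a = 0)
    (i : Fin n) (R : Finset (Fin n)) (hiR : i ∉ R) (hR : R.card = d)
    (hrep : ∀ j ∈ R, ∀ a : Fin n → Fin s,
      ∑ u : Fin s, C j (Function.update a i u) =
      ∑ u : Fin s, C' j (Function.update a i u)) :
    C i = C' i := by
  set D : Fin n → (Fin n → Fin s) → F := fun j a => C j a - C' j a with hDdef
  have hD : ∀ t < r, ∀ a : Fin n → Fin s, ∑ j, lam j (a j) ^ t * D j a = 0 := by
    intro t ht a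
    simp only [hDdef, mul_sub, Finset.sum_sub_distrib, hC t ht a, hC' t ht a, sub_zero]
  have hrepD : ∀ j ∈ R, ∀ a : Fin n → Fin s,
      ∑ u : Fin s, D j (Function.update a i u) = 0 := by
    intro j hj a
    simp only [hDdef, Finset.sum_sub_distrib, hrep j hj a, sub_self]
  funext a
  rw [← sub_eq_zero]
  show D i a = 0
  -- set up the index set
  set E : Finset (Fin n) := Finset.univ \ insert i R with hEdef
  have hiE : i ∉ E := by simp [hEdef]
  have hRE : ∀ j ∈ E, j ∉ insert i R := fun j hj => (Finset.mem_sdiff.mp hj).2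
  have hEcard : E.card = n - (d + 1) := by
    rw [hEdef, Finset.card_sdiff_of_subset (Finset.subset_univ _), Finset.card_insert_of_notMem hiR,
      hR, Finset.card_univ, Fintype.card_fin]
  have hcardK : Fintype.card (Fin s ⊕ {j : Fin n // j ∈ E}) = r := by
    simp only [Fintype.card_sum, Fintype.card_fin, Fintype.card_coe, hEcard]
    omega
  set e : (Fin s ⊕ {j : Fin n // j ∈ E}) ≃ Fin r := Fintype.equivFinOfCardEq hcardK with hedef
  set nodeval : (Fin s ⊕ {j : Fin n // j ∈ E}) → F :=
    fun k => Sum.elim (fun u => lam i u) (fun j => lam j.1 (a j.1)) k with hnode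
  set xval : (Fin s ⊕ {j : Fin n // j ∈ E}) → F :=
    fun k => Sum.elim (fun u => D i (Function.update a i u))
      (fun j => ∑ u : Fin s, D j.1 (Function.update a i u)) k with hxval
  have hnodeinj : Function.Injective nodeval := by
    intro k k' hkk
    rcases k with u | j <;> rcases k' with u' | j' <;> simp only [hnode, Sum.elim_inl, Sum.elim_inr] at hkk
    · have := @hdist (i, u) (i, u') hkk
      simp at this; simp [this]
    · have := @hdist (i, u) (j'.1, a j'.1) hkk
      have hji : j'.1 ≠ i := by intro h; exact (hRE j'.1 j'.2) (by simp [h])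
      simp at this; exact absurd this.1.symm hji
    · have := @hdist (j.1, a j.1) (i, u') hkk
      have hji : j.1 ≠ i := by intro h; exact (hRE j.1 j.2) (by simp [h])
      simp at this; exact absurd this.1 hji
    · have := @hdist (j.1, a j.1) (j'.1, a j'.1) hkk
      exact congrArg Sum.inr (Subtype.ext (congrArg Prod.fst this))
  -- the key equations
  have keyeq : ∀ t : Fin r, ∑ k : Fin s ⊕ {j : Fin n // j ∈ E},
      xval k * nodeval k ^ (t : ℕ) = 0 := by
    intro t
    have ht : (t : ℕ) < r := t.2
    -- sum hD over updates
    have h0 : ∑ u : Fin s, ∑ j, lam j (Function.update a i u j) ^ (t : ℕ)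
        * D j (Function.update a i u) = 0 := by
      exact Finset.sum_eq_zero fun u _ => hD t ht _
    rw [Finset.sum_comm] at h0
    set g : Fin n → F := fun j => ∑ u : Fin s,
      lam j (Function.update a i u j) ^ (t : ℕ) * D j (Function.update a i u) with hg
    have hgR : ∀ j ∈ R, g j = 0 := by
      intro j hj
      have hji : j ≠ i := fun h => hiR (h ▸ hj)
      simp only [hg, Function.update_of_ne hji, ← Finset.mul_sum, hrepD j hj a, mul_zero]
    have hsplit : ∑ j, g j = (g i + ∑ j ∈ R, g j) + ∑ j ∈ E, g j := by
      have h1 := Finset.sum_sdiff (f := g) (Finset.subset_univ (insert i R))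
      rw [Finset.sum_insert hiR] at h1
      rw [hEdef, ← h1]; ring
    have hgi : g i = ∑ u : Fin s, lam i u ^ (t : ℕ) * D i (Function.update a i u) := by
      simp [hg]
    have hgE : ∑ j ∈ E, g j = ∑ j : {j : Fin n // j ∈ E},
        lam j.1 (a j.1) ^ (t : ℕ) * (∑ u : Fin s, D j.1 (Function.update a i u)) := by
      rw [← Finset.sum_coe_sort E g]
      refine Finset.sum_congr rfl fun j _ => ?_
      have hji : j.1 ≠ i := by intro h; exact (hRE j.1 j.2) (by simp [h])
      simp only [hg, Function.update_of_ne hji, ← Finset.mul_sum]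
    rw [Fintype.sum_sum_type]
    simp only [hxval, hnode, Sum.elim_inl, Sum.elim_inr]
    have : ∑ j, g j = 0 := h0
    rw [hsplit, Finset.sum_eq_zero hgR, add_zero, hgi, hgE] at this
    calc (∑ u : Fin s, D i (Function.update a i u) * lam i u ^ (t:ℕ))
        + ∑ j : {j : Fin n // j ∈ E},
            (∑ u : Fin s, D j.1 (Function.update a i u)) * lam j.1 (a j.1) ^ (t:ℕ)
        = (∑ u : Fin s, lam i u ^ (t:ℕ) * D i (Function.update a i u))
        + ∑ j : {j : Fin n // j ∈ E},
            lam j.1 (a j.1) ^ (t:ℕ) * (∑ u : Fin s, D j.1 (Function.update a i u)) := by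
          congr 1 <;> exact Finset.sum_congr rfl fun _ _ => mul_comm _ _
      _ = 0 := this
  -- apply Vandermonde
  have hzero : (fun t : Fin r => xval (e.symm t)) = 0 := by
    apply Matrix.eq_zero_of_forall_pow_sum_mul_pow_eq_zero
      (f := fun t => nodeval (e.symm t)) (hnodeinj.comp e.symm.injective)
    intro t
    rw [Equiv.sum_comp e.symm (fun k => xval k * nodeval k ^ (t : ℕ))]
    exact keyeq t
  have := congrFun hzero (e (Sum.inl (a i)))
  simp only [Equiv.symm_apply_apply, hxval, Sum.elim_inl, Pi.zero_apply,
    Function.update_eq_self] at this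
  exact this
end

section
/- The code C of Construction 2 has the universally error-resilient d-optimal repair property: let t ≥ 0 be an integer, i ∈ {1,…,n}, and R ⊆ {1,…,n}∖{i} with |R| = d + 2t ≤ n − 1. Suppose values μ̃_{j,a} ∈ F are given for each j ∈ R and each digit string a. If (C_1,…,C_n) and (C'_1,…,C'_n) are codewords of C such that the set {j ∈ R : ∃ a, ∑_{u=0}^{s−1} c_{j,a(i,u)} ≠ μ̃_{j,a}} has size at most t, and likewise the set {j ∈ R : ∃ a, ∑_{u=0}^{s−1} c'_{j,a(i,u)} ≠ μ̃_{j,a}} has size at most t, then C_i = C'_i. (Node i is uniquely recoverable from the group sums downloaded from any d+2t helpers even if up to t of them are erroneous.) -/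
theorem vand_fin {F : Type*} [Field F] {m : ℕ} (lam v : Fin m → F)
    (hinj : Function.Injective lam)
    (h : ∀ t' < m, ∑ x, lam x ^ t' * v x = 0) : v = 0 := by
  have hdet : (Matrix.vandermonde lam).transpose.det ≠ 0 := by
    rw [Matrix.det_transpose, Matrix.det_vandermonde_ne_zero_iff]
    exact hinj
  apply Matrix.eq_zero_of_mulVec_eq_zero hdet
  funext t'
  simpa [Matrix.mulVec, Matrix.vandermonde, Matrix.transpose_apply, dotProduct,
    mul_comm] using h t' t'.isLt

theorem vand_key {F : Type*} [Field F] {ι : Type*} [Fintype ι] (r : ℕ)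
    (hcard : Fintype.card ι ≤ r) (lam v : ι → F) (hinj : Function.Injective lam)
    (h : ∀ t' < r, ∑ x, lam x ^ t' * v x = 0) : v = 0 := by
  let e := Fintype.equivFin ι
  have h0 : (v ∘ e.symm) = 0 := by
    apply vand_fin (lam ∘ e.symm) _ (hinj.comp e.symm.injective)
    intro t' ht'
    have := h t' (lt_of_lt_of_le ht' hcard)
    rw [← Equiv.sum_comp e.symm (fun x => lam x ^ t' * v x)] at this
    exact this
  funext x
  have := congrFun h0 (e x)
  simpa using this

open Classical in
/-- Construction 2 has the universally error-resilient `d`-optimal repair property: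
node `i` is uniquely determined by the group sums downloaded from any `d + 2t`
helpers, even if up to `t` of the helpers report erroneous values. -/
theorem construction2_UER_d_optimal_repair
    (F : Type*) [Field F] (n r d s t : ℕ) (hr : 1 ≤ r) (hrn : r < n)
    (hd1 : n - r ≤ d) (hd2 : d ≤ n - 1) (hs : s = d + 1 - (n - r))
    (lam : Fin n → Fin s → F)
    (hdist : Function.Injective fun p : Fin n × Fin s => lam p.1 p.2)
    (i : Fin n) (R : Finset (Fin n)) (hiR : i ∉ R)
    (hR : R.card = d + 2 * t) (hRn : d + 2 * t ≤ n - 1)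
    (μt : Fin n → (Fin n → Fin s) → F)
    (C C' : Fin n → (Fin n → Fin s) → F)
    (hC : ∀ t' < r, ∀ a : Fin n → Fin s, ∑ j, lam j (a j) ^ t' * C j a = 0)
    (hC' : ∀ t' < r, ∀ a : Fin n → Fin s, ∑ j, lam j (a j) ^ t' * C' j a = 0)
    (herr : (R.filter fun j => ∃ a : Fin n → Fin s,
      ∑ u : Fin s, C j (Function.update a i u) ≠ μt j a).card ≤ t)
    (herr' : (R.filter fun j => ∃ a : Fin n → Fin s,
      ∑ u : Fin s, C' j (Function.update a i u) ≠ μt j a).card ≤ t) :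
    C i = C' i := by
  -- the difference codeword
  set D : Fin n → (Fin n → Fin s) → F := fun j a => C j a - C' j a with hDdef
  have hD : ∀ t' < r, ∀ a : Fin n → Fin s, ∑ j, lam j (a j) ^ t' * D j a = 0 := by
    intro t' ht' a
    have := hC t' ht' a
    have := hC' t' ht' a
    simp only [hDdef, mul_sub, Finset.sum_sub_distrib]
    rw [hC t' ht' a, hC' t' ht' a, sub_zero]
  -- the error sets
  set E : Finset (Fin n) := R.filter fun j => ∃ a : Fin n → Fin s,
      ∑ u : Fin s, C j (Function.update a i u) ≠ μt j a with hEdef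
  set E' : Finset (Fin n) := R.filter fun j => ∃ a : Fin n → Fin s,
      ∑ u : Fin s, C' j (Function.update a i u) ≠ μt j a with hE'def
  set S : Finset (Fin n) := R \ (E ∪ E') with hSdef
  have hSsub : S ⊆ R := Finset.sdiff_subset
  have hiS : i ∉ S := fun h => hiR (hSsub h)
  have hScard : d ≤ S.card := by
    have h1 : R.card - (E ∪ E').card ≤ S.card := Finset.le_card_sdiff _ _
    have h2 : (E ∪ E').card ≤ E.card + E'.card := Finset.card_union_le _ _
    omega
  -- helpers in S give zero group sums for D
  have hSzero : ∀ j ∈ S, ∀ a : Fin n → Fin s,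
      ∑ u : Fin s, D j (Function.update a i u) = 0 := by
    intro j hj a
    have hjE : j ∉ E := fun h => (Finset.mem_sdiff.mp hj).2 (Finset.mem_union_left _ h)
    have hjE' : j ∉ E' := fun h => (Finset.mem_sdiff.mp hj).2 (Finset.mem_union_right _ h)
    have hjR : j ∈ R := hSsub hj
    have h1 : ∑ u : Fin s, C j (Function.update a i u) = μt j a := by
      by_contra h
      exact hjE (Finset.mem_filter.mpr ⟨hjR, ⟨a, h⟩⟩)
    have h2 : ∑ u : Fin s, C' j (Function.update a i u) = μt j a := by
      by_contra h
      exact hjE' (Finset.mem_filter.mpr ⟨hjR, ⟨a, h⟩⟩)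
    simp only [hDdef, Finset.sum_sub_distrib, h1, h2, sub_self]
  -- it suffices to show D i = 0
  suffices hDi : ∀ a : Fin n → Fin s, D i a = 0 by
    funext a
    have h := hDi a
    simp only [hDdef] at h
    exact sub_eq_zero.mp h
  intro a
  -- the set of "unknown" helper nodes
  set B : Finset (Fin n) := Finset.univ \ insert i S with hBdef
  have hBcard : B.card = n - (S.card + 1) := by
    rw [hBdef, Finset.card_sdiff_of_subset (Finset.subset_univ _), Finset.card_insert_of_notMem hiS]
    simp
  have hiB : i ∉ B := by simp [hBdef]
  -- index type for the Vandermonde system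
  have hcard : Fintype.card (Fin s ⊕ {j // j ∈ B}) ≤ r := by
    rw [Fintype.card_sum, Fintype.card_coe, Fintype.card_fin]
    have : S.card + 1 ≤ n := by
      have h := Finset.card_le_univ (insert i S)
      rw [Finset.card_insert_of_notMem hiS] at h
      simpa using h
    omega
  set lam' : Fin s ⊕ {j // j ∈ B} → F :=
    Sum.elim (fun u => lam i u) (fun j => lam j.1 (a j.1)) with hlam'def
  have hlaminj : Function.Injective lam' := by
    rintro (u | j) (u' | j') h
    · have := hdist (a₁ := (i, u)) (a₂ := (i, u')) h
      simpa using this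
    · exfalso
      have h2 := hdist (a₁ := (i, u)) (a₂ := (j'.1, a j'.1)) h
      have hj' : j'.1 ∈ B := j'.2
      have hij : i = j'.1 := congrArg Prod.fst h2
      rw [← hij] at hj'
      exact hiB hj'
    · exfalso
      have h2 := hdist (a₁ := (j.1, a j.1)) (a₂ := (i, u')) h
      have hj : j.1 ∈ B := j.2
      have hij : j.1 = i := congrArg Prod.fst h2
      rw [hij] at hj
      exact hiB hj
    · have h2 := hdist (a₁ := (j.1, a j.1)) (a₂ := (j'.1, a j'.1)) h
      exact congrArg Sum.inr (Subtype.ext (congrArg Prod.fst h2))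
  set v : Fin s ⊕ {j // j ∈ B} → F :=
    Sum.elim (fun u => D i (Function.update a i u))
      (fun j => ∑ u : Fin s, D j.1 (Function.update a i u)) with hvdef
  have hveq : v = 0 := by
    apply vand_key r hcard lam' v hlaminj
    intro t' ht'
    -- sum the parity equations over u
    have h1 : ∑ j : Fin n, ∑ u : Fin s,
        lam j (Function.update a i u j) ^ t' * D j (Function.update a i u) = 0 := by
      rw [Finset.sum_comm]
      exact Finset.sum_eq_zero fun u _ => hD t' ht' _
    set f : Fin n → F := fun j => ∑ u : Fin s,
        lam j (Function.update a i u j) ^ t' * D j (Function.update a i u) with hfdef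
    have hsplit : ∑ j ∈ B, f j + ∑ j ∈ insert i S, f j = ∑ j : Fin n, f j := by
      rw [hBdef]
      exact Finset.sum_sdiff (Finset.subset_univ _)
    have hfi : f i = ∑ u : Fin s, lam i u ^ t' * D i (Function.update a i u) := by
      simp [hfdef, Function.update_self]
    have hfS : ∀ j ∈ S, f j = 0 := by
      intro j hj
      have hji : j ≠ i := fun h => hiS (h ▸ hj)
      simp only [hfdef, Function.update_of_ne hji]
      rw [← Finset.mul_sum, hSzero j hj a, mul_zero]
    have hfB : ∀ j ∈ B, f j = lam j (a j) ^ t' * ∑ u : Fin s, D j (Function.update a i u) := by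
      intro j hj
      have hji : j ≠ i := fun h => hiB (h ▸ hj)
      simp only [hfdef, Function.update_of_ne hji]
      rw [← Finset.mul_sum]
    calc ∑ x : Fin s ⊕ {j // j ∈ B}, lam' x ^ t' * v x
        = ∑ u : Fin s, lam i u ^ t' * D i (Function.update a i u)
          + ∑ j : {j // j ∈ B}, lam j.1 (a j.1) ^ t'
            * ∑ u : Fin s, D j.1 (Function.update a i u) := by
          rw [Fintype.sum_sum_type]; rfl
      _ = f i + ∑ j ∈ B, f j := by
          rw [hfi]
          congr 1
          rw [Finset.sum_coe_sort B (fun j => lam j (a j) ^ t'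
            * ∑ u : Fin s, D j (Function.update a i u))]
          exact Finset.sum_congr rfl fun j hj => (hfB j hj).symm
      _ = ∑ j ∈ B, f j + ∑ j ∈ insert i S, f j := by
          rw [Finset.sum_insert hiS, Finset.sum_eq_zero hfS, add_zero, add_comm]
      _ = 0 := by rw [hsplit, h1]
  have := congrFun hveq (Sum.inl (a i))
  simpa [hvdef, Function.update_eq_self] using this
end

section
/- The diagonal code C with parameter s has the d'-optimal repair property for every admissible d' simultaneously: let d' be any integer with k ≤ d' ≤ n − 1 such that s' := d' + 1 − k divides s, and partition {0,…,s−1} into the s/s' consecutive blocks I_j = {(j−1)s', (j−1)s'+1, …, js'−1}, j = 1,…,s/s'. Then for every node index i ∈ {1,…,n} and every R ⊆ {1,…,n}∖{i} with |R| = d', any two codewords (C_1,…,C_n) and (C'_1,…,C'_n) in C satisfying ∑_{u∈I_j} c_{v,a(i,u)} = ∑_{u∈I_j} c'_{v,a(i,u)} for every v ∈ R, every block index j, and every digit string a, also satisfy C_i = C'_i. In particular, taking s = lcm(d_1+1−k,…,d_m+1−k) yields a code with d_i-optimal repair for all i ∈ {1,…,m} simultaneously. -/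
/-- The diagonal code with parameter `s` has the `d'`-optimal repair property for
every `d'` with `k ≤ d' ≤ n-1` and `s' = d' + 1 - k` dividing `s`: node `i` is
determined by the block sums `∑_{u ∈ I_j} c_{v,a(i,u)}` over consecutive blocks
`I_j` of length `s'`, downloaded from any `d'` helpers. -/
theorem diagonal_code_simultaneous_d_optimal_repair
    (F : Type*) [Field F] (n r s : ℕ) (hr : 1 ≤ r) (hrn : r < n) (hspos : 0 < s)
    (lam : Fin n → Fin s → F)
    (hdist : Function.Injective fun p : Fin n × Fin s => lam p.1 p.2)
    (C C' : Fin n → (Fin n → Fin s) → F)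
    (hC : ∀ t < r, ∀ a : Fin n → Fin s, ∑ i, lam i (a i) ^ t * C i a = 0)
    (hC' : ∀ t < r, ∀ a : Fin n → Fin s, ∑ i, lam i (a i) ^ t * C' i a = 0)
    (d' s' : ℕ) (hd1 : n - r ≤ d') (hd2 : d' ≤ n - 1)
    (hs' : s' = d' + 1 - (n - r)) (hdvd : s' ∣ s)
    (i : Fin n) (R : Finset (Fin n)) (hiR : i ∉ R) (hR : R.card = d')
    (hrep : ∀ v ∈ R, ∀ j < s / s', ∀ a : Fin n → Fin s,
      ∑ u ∈ Finset.univ.filter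
          (fun u : Fin s => j * s' ≤ (u : ℕ) ∧ (u : ℕ) < (j + 1) * s'),
        C v (Function.update a i u) =
      ∑ u ∈ Finset.univ.filter
          (fun u : Fin s => j * s' ≤ (u : ℕ) ∧ (u : ℕ) < (j + 1) * s'),
        C' v (Function.update a i u)) :
    C i = C' i := by
  classical
  set D : Fin n → (Fin n → Fin s) → F := fun v b => C v b - C' v b with hDdef
  have hD : ∀ t < r, ∀ a : Fin n → Fin s, ∑ v, lam v (a v) ^ t * D v a = 0 := by
    intro t ht a
    simp only [hDdef, mul_sub, Finset.sum_sub_distrib, hC t ht a, hC' t ht a, sub_zero]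
  have hDrep : ∀ v ∈ R, ∀ j < s / s', ∀ a : Fin n → Fin s,
      ∑ u ∈ Finset.univ.filter
          (fun u : Fin s => j * s' ≤ (u : ℕ) ∧ (u : ℕ) < (j + 1) * s'),
        D v (Function.update a i u) = 0 := by
    intro v hv j hj a
    simp only [hDdef, Finset.sum_sub_distrib]
    rw [hrep v hv j hj a, sub_self]
  have hs'pos : 0 < s' := by omega
  funext a
  rw [← sub_eq_zero]
  show D i a = 0
  set j := (a i : ℕ) / s' with hj
  have hjlt : j < s / s' := Nat.div_lt_div_of_lt_of_dvd hdvd (a i).isLt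
  set B : Finset (Fin s) :=
    Finset.univ.filter (fun u : Fin s => j * s' ≤ (u : ℕ) ∧ (u : ℕ) < (j + 1) * s') with hBdef
  have hub : (j + 1) * s' ≤ s := by
    calc (j + 1) * s' ≤ (s / s') * s' := Nat.mul_le_mul_right _ hjlt
      _ = s := Nat.div_mul_cancel hdvd
  have hBcard : B.card = s' := by
    have hB2 : B = (Finset.Ico (j * s') ((j + 1) * s')).attachFin
        (fun m hm => lt_of_lt_of_le (Finset.mem_Ico.mp hm).2 hub) := by
      ext u
      simp [hBdef, Finset.mem_attachFin, Finset.mem_Ico]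
    rw [hB2, Finset.card_attachFin, Nat.card_Ico, add_mul, one_mul,
      Nat.add_sub_cancel_left]
  have haiB : a i ∈ B := by
    simp only [hBdef, Finset.mem_filter, Finset.mem_univ, true_and]
    constructor
    · exact Nat.div_mul_le_self _ _
    · have h1 : s' * j + (a i : ℕ) % s' = a i := Nat.div_add_mod _ _
      have h2 : (a i : ℕ) % s' < s' := Nat.mod_lt _ hs'pos
      calc (a i : ℕ) = s' * j + (a i : ℕ) % s' := h1.symm
        _ < s' * j + s' := by omega
        _ = (j + 1) * s' := by ring
  set W : Finset (Fin n) := Finset.univ \ insert i R with hWdef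
  have hWcard : W.card = n - (d' + 1) := by
    rw [hWdef, Finset.card_sdiff_of_subset (Finset.subset_univ _),
      Finset.card_insert_of_notMem hiR, hR, Finset.card_univ, Fintype.card_fin]
  have hcardT : Fintype.card (↥B ⊕ ↥W) = r := by
    simp only [Fintype.card_sum, Fintype.card_coe, hBcard, hWcard]
    omega
  have hWne : ∀ v : ↥W, (v : Fin n) ≠ i := by
    rintro ⟨v, hv⟩
    rw [hWdef, Finset.mem_sdiff] at hv
    intro h
    exact hv.2 (h ▸ Finset.mem_insert_self i R)
  set μ : ↥B ⊕ ↥W → F :=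
    Sum.elim (fun u => lam i u.1) (fun v => lam v.1 (a v.1)) with hμdef
  set z : ↥B ⊕ ↥W → F :=
    Sum.elim (fun u => D i (Function.update a i u.1))
      (fun v => ∑ u ∈ B, D v.1 (Function.update a i u)) with hzdef
  have hμinj : Function.Injective μ := by
    rintro (⟨u1, hu1⟩ | ⟨v1, hv1⟩) (⟨u2, hu2⟩ | ⟨v2, hv2⟩) h <;>
      simp only [hμdef, Sum.elim_inl, Sum.elim_inr] at h
    · have h2 : ((i, u1) : Fin n × Fin s) = (i, u2) := hdist (by simpa using h)
      simp only [Prod.mk.injEq, true_and] at h2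
      exact congrArg Sum.inl (Subtype.ext h2)
    · have h2 : ((i, u1) : Fin n × Fin s) = (v2, a v2) := hdist (by simpa using h)
      exact absurd (congrArg Prod.fst h2).symm (hWne ⟨v2, hv2⟩)
    · have h2 : ((v1, a v1) : Fin n × Fin s) = (i, u2) := hdist (by simpa using h)
      exact absurd (congrArg Prod.fst h2) (hWne ⟨v1, hv1⟩)
    · have h2 : ((v1, a v1) : Fin n × Fin s) = (v2, a v2) := hdist (by simpa using h)
      exact congrArg Sum.inr (Subtype.ext (congrArg Prod.fst h2))
  have hsum : ∀ t : ℕ, t < r → ∑ τ : ↥B ⊕ ↥W, μ τ ^ t * z τ = 0 := by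
    intro t ht
    have h1 : ∀ u : Fin s,
        lam i u ^ t * D i (Function.update a i u)
          + ∑ v ∈ ({i}ᶜ : Finset (Fin n)),
              lam v (a v) ^ t * D v (Function.update a i u)
        = ∑ v : Fin n,
            lam v (Function.update a i u v) ^ t * D v (Function.update a i u) := by
      intro u
      rw [Fintype.sum_eq_add_sum_compl i]
      congr 1
      · rw [Function.update_self]
      · refine Finset.sum_congr rfl fun v hv => ?_
        rw [Function.update_of_ne (by simpa using hv)]
    have key : ∑ u ∈ B, (lam i u ^ t * D i (Function.update a i u)
        + ∑ v ∈ ({i}ᶜ : Finset (Fin n)),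
            lam v (a v) ^ t * D v (Function.update a i u)) = 0 := by
      rw [Finset.sum_congr rfl fun u _ => h1 u]
      exact Finset.sum_eq_zero fun u _ => hD t ht _
    have hcompl : ({i}ᶜ : Finset (Fin n)) = R ∪ W := by
      ext v
      by_cases hvi : v = i
      · subst hvi; simp [hWdef, hiR]
      · simp only [Finset.mem_compl, Finset.mem_singleton, hvi, not_false_iff,
          Finset.mem_union, hWdef, Finset.mem_sdiff, Finset.mem_univ, true_and,
          Finset.mem_insert, true_iff]
        tauto
    have hdisj : Disjoint R W := by
      rw [Finset.disjoint_left]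
      intro v hv hvW
      rw [hWdef, Finset.mem_sdiff] at hvW
      exact hvW.2 (Finset.mem_insert_of_mem hv)
    rw [Finset.sum_add_distrib, Finset.sum_comm, hcompl, Finset.sum_union hdisj] at key
    have hRzero : ∑ v ∈ R, ∑ u ∈ B, lam v (a v) ^ t * D v (Function.update a i u) = 0 :=
      Finset.sum_eq_zero fun v hv => by
        rw [← Finset.mul_sum, hDrep v hv j hjlt a, mul_zero]
    rw [hRzero, zero_add] at key
    calc ∑ τ : ↥B ⊕ ↥W, μ τ ^ t * z τ
        = (∑ u : ↥B, lam i u.1 ^ t * D i (Function.update a i u.1))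
          + ∑ v : ↥W, lam v.1 (a v.1) ^ t * ∑ u ∈ B, D v.1 (Function.update a i u) := by
          rw [Fintype.sum_sum_type]
          simp only [hμdef, hzdef, Sum.elim_inl, Sum.elim_inr]
      _ = (∑ u ∈ B, lam i u ^ t * D i (Function.update a i u))
          + ∑ v ∈ W, lam v (a v) ^ t * ∑ u ∈ B, D v (Function.update a i u) := by
          rw [Finset.sum_coe_sort B (fun u => lam i u ^ t * D i (Function.update a i u)),
            Finset.sum_coe_sort W
              (fun v => lam v (a v) ^ t * ∑ u ∈ B, D v (Function.update a i u))]
      _ = 0 := by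
          rw [← key]
          congr 1
          exact Finset.sum_congr rfl fun v _ => Finset.mul_sum _ _ _
  have e : (↥B ⊕ ↥W) ≃ Fin r := Fintype.equivFinOfCardEq hcardT
  set vv : Fin r → F := μ ∘ e.symm with hvvdef
  have hvvinj : Function.Injective vv := hμinj.comp e.symm.injective
  set M : Matrix (Fin r) (Fin r) F := (Matrix.vandermonde vv).transpose with hMdef
  have hdet : M.det ≠ 0 := by
    rw [hMdef, Matrix.det_transpose, Matrix.det_vandermonde]
    refine Finset.prod_ne_zero_iff.mpr fun p _ => Finset.prod_ne_zero_iff.mpr fun q hq => ?_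
    exact sub_ne_zero.mpr fun hEq => absurd (hvvinj hEq) (Finset.mem_Ioi.mp hq).ne'
  have hmv : M.mulVec (z ∘ e.symm) = 0 := by
    funext t
    show ∑ q, M t q * (z ∘ e.symm) q = 0
    simp only [hMdef, Matrix.transpose_apply, Matrix.vandermonde_apply, hvvdef,
      Function.comp_apply]
    exact (Equiv.sum_comp e.symm fun τ => μ τ ^ (t : ℕ) * z τ).trans (hsum t t.isLt)
  have hz0 : z ∘ e.symm = 0 := Matrix.eq_zero_of_mulVec_eq_zero hdet hmv
  have hz : z (Sum.inl ⟨a i, haiB⟩) = 0 := by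
    have := congrFun hz0 (e (Sum.inl ⟨a i, haiB⟩))
    simpa using this
  simp only [hzdef, Sum.elim_inl] at hz
  rwa [Function.update_eq_self] at hz
end

section
/- The code C of Construction 1 has the d-optimal repair property whenever (d + 1 − k) divides n − k: let d be an integer with k ≤ d ≤ n − 1 and s' := d + 1 − k dividing r, and partition {0,…,r−1} into the r/s' consecutive blocks I_j = {(j−1)s',…,js'−1}. Then for every node index i ∈ {1,…,n} and every R ⊆ {1,…,n}∖{i} with |R| = d, any two codewords of C whose group sums ∑_{u∈I_j} c_{v,a(i,u)} agree for every v ∈ R, every block index j, and every digit string a, have equal i-th node. -/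
/-!
Fix a string `a` and let `B` be the block of digits containing `a i`. Summing the parity checks
of the difference `D = C - C'` at the strings `a(i,u)`, `u ∈ B`, gives, for every `t < r`,
`∑_{u ∈ B} λ_{i,u}^t D_{i,a(i,u)} + ∑_{v ≠ i} λ_{v,a_v}^t ∑_{u ∈ B} D_{v,a(i,u)} = 0`.
The inner sums vanish for the `d` helpers `v ∈ R`, which leaves `|B| + (n - d - 1) = r`
unknowns attached to the distinct points `λ_{i,u}` and `λ_{v,a_v}`. The `r × r` Vandermonde
system forces all of them to vanish, in particular `D_{i,a} = 0`.
-/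

open Finset Function

theorem Finset.eq_zero_of_forall_sum_pow_mul_eq_zero {R ι : Type*} [CommRing R] [IsDomain R]
    {s : Finset ι} {w x : ι → R} (hw : Set.InjOn w s)
    (h : ∀ t < #s, ∑ m ∈ s, w m ^ t * x m = 0) : ∀ m ∈ s, x m = 0 := by
  let e := s.equivFin
  have hx : (fun q => x (e.symm q)) = 0 := by
    refine Matrix.eq_zero_of_forall_pow_sum_mul_pow_eq_zero (f := fun q => w (e.symm q))
      (fun q q' hq => e.symm.injective (Subtype.ext (hw (e.symm q).2 (e.symm q').2 hq)))
      fun t => ?_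
    rw [← h t t.isLt, ← s.sum_coe_sort, ← e.symm.sum_comp]
    simp_rw [mul_comm]
  intro m hm
  simpa using congrFun hx (e ⟨m, hm⟩)

namespace Construction1

variable {F ι α : Type*} [Field F] [Fintype ι]

/-- The code of Construction 1 over arbitrary node and digit types: `C i a` is the `a`-th
coordinate `c_{i,a}` of node `i`. -/
def IsCodeword (lam : ι → α → F) (r : ℕ) (C : ι → (ι → α) → F) : Prop :=
  ∀ t < r, ∀ a : ι → α, ∑ i, lam i (a i) ^ t * C i a = 0

namespace IsCodeword

variable {lam : ι → α → F} {r : ℕ} {D : ι → (ι → α) → F}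

theorem sub {C C' : ι → (ι → α) → F} (hC : IsCodeword lam r C) (hC' : IsCodeword lam r C') :
    IsCodeword lam r (C - C') := by
  intro t ht a
  simp only [Pi.sub_apply, mul_sub, sum_sub_distrib, hC t ht a, hC' t ht a, sub_zero]

theorem sum_update [DecidableEq ι] (hD : IsCodeword lam r D) {t : ℕ} (ht : t < r)
    (a : ι → α) (i : ι) (B : Finset α) :
    ∑ u ∈ B, lam i u ^ t * D i (update a i u) +
      ∑ v ∈ {i}ᶜ, lam v (a v) ^ t * ∑ u ∈ B, D v (update a i u) = 0 := by
  have hsplit : ∀ u, lam i u ^ t * D i (update a i u) +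
      ∑ v ∈ {i}ᶜ, lam v (a v) ^ t * D v (update a i u) = 0 := fun u => by
    have h := hD t ht (update a i u)
    rw [Fintype.sum_eq_add_sum_compl i, update_self] at h
    rwa [sum_congr rfl fun v hv => by
      rw [update_of_ne (by simpa using hv : v ≠ i)]] at h
  simp_rw [mul_sum]
  rw [sum_comm, ← sum_add_distrib]
  exact sum_eq_zero fun u _ => hsplit u

theorem eq_zero_of_sum_update_eq_zero [DecidableEq ι] (hD : IsCodeword lam r D)
    (hlam : Injective fun p : ι × α => lam p.1 p.2) {i : ι} {R : Finset ι} (hiR : i ∉ R)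
    {B : Finset α} (hcard : #B + (Fintype.card ι - (#R + 1)) ≤ r) (a : ι → α)
    (hR : ∀ v ∈ R, ∑ u ∈ B, D v (update a i u) = 0) : ∀ u ∈ B, D i (update a i u) = 0 := by
  set T : Finset ι := (insert i R)ᶜ
  have hTi : ∀ v ∈ T, v ≠ i := fun v hv => by simp_all [T]
  -- the unknowns of the Vandermonde system, indexed by their evaluation points `(v, u) ↦ λ_{v,u}`
  let S : Finset (ι × α) := (B.map (Embedding.sectR i α)).disjUnion
    (T.map ⟨fun v => (v, a v), fun _ _ h => congrArg Prod.fst h⟩)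
    (disjoint_left.2 <| by
      simp only [mem_map, Embedding.sectR_apply]
      rintro _ ⟨u, -, rfl⟩ ⟨v, hv, hvu⟩
      exact hTi v hv (congrArg Prod.fst hvu))
  let x : ι × α → F := fun p =>
    if p.1 = i then D i (update a i p.2) else ∑ u ∈ B, D p.1 (update a i u)
  have hS : ∀ t < #S, ∑ p ∈ S, lam p.1 p.2 ^ t * x p = 0 := by
    intro t ht
    have hSr : #S ≤ r := by
      rw [card_disjUnion, card_map, card_map, card_compl, card_insert_of_notMem hiR]
      exact hcard
    have hT : ∑ v ∈ T, lam v (a v) ^ t * ∑ u ∈ B, D v (update a i u) =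
        ∑ v ∈ {i}ᶜ, lam v (a v) ^ t * ∑ u ∈ B, D v (update a i u) :=
      sum_subset (fun v hv => by simpa using hTi v hv) fun v _ hvT => by
        rw [hR v (by simp_all [T]), mul_zero]
    rw [sum_disjUnion, sum_map, sum_map, ← hD.sum_update (ht.trans_le hSr) a i B, ← hT]
    congr 1
    · simp [x]
    · exact sum_congr rfl fun v hv => congrArg _ (if_neg (hTi v hv))
  intro u hu
  simpa [x] using eq_zero_of_forall_sum_pow_mul_eq_zero hlam.injOn hS (i, u)
    (mem_disjUnion.2 (Or.inl (mem_map_of_mem _ hu)))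

end IsCodeword

end Construction1

def digitBlock (r s j : ℕ) : Finset (Fin r) :=
  univ.filter fun u : Fin r => j * s ≤ (u : ℕ) ∧ (u : ℕ) < (j + 1) * s

theorem card_digitBlock_le (r s j : ℕ) : #(digitBlock r s j) ≤ s :=
  calc #(digitBlock r s j) = #((digitBlock r s j).map Fin.valEmbedding) := (card_map _).symm
    _ ≤ #(Ico (j * s) ((j + 1) * s)) :=
      card_le_card fun m hm => by
        obtain ⟨u, hu, rfl⟩ := mem_map.1 hm
        simpa [digitBlock] using hu
    _ = s := by rw [Nat.card_Ico, add_mul, one_mul, Nat.add_sub_cancel_left]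

theorem mem_digitBlock_div {r s : ℕ} (hs : 0 < s) (u : Fin r) : u ∈ digitBlock r s (u / s) := by
  rw [digitBlock, mem_filter, add_mul, one_mul]
  exact ⟨mem_univ _, Nat.div_mul_le_self _ _, Nat.lt_div_mul_add hs⟩

theorem construction1_d_optimal_repair_of_dvd_general
    (F : Type*) [Field F] (n r : ℕ)
    (lam : Fin n → Fin r → F)
    (hdist : Function.Injective fun p : Fin n × Fin r => lam p.1 p.2)
    (C C' : Fin n → (Fin n → Fin r) → F)
    (hC : ∀ t < r, ∀ a : Fin n → Fin r, ∑ i, lam i (a i) ^ t * C i a = 0)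
    (hC' : ∀ t < r, ∀ a : Fin n → Fin r, ∑ i, lam i (a i) ^ t * C' i a = 0)
    (d s' : ℕ) (hd1 : n - r ≤ d) (hd2 : d ≤ n - 1)
    (hs' : s' = d + 1 - (n - r)) (hdvd : s' ∣ r)
    (i : Fin n) (R : Finset (Fin n)) (hiR : i ∉ R) (hR : R.card = d)
    (hrep : ∀ v ∈ R, ∀ j < r / s', ∀ a : Fin n → Fin r,
      ∑ u ∈ Finset.univ.filter
          (fun u : Fin r => j * s' ≤ (u : ℕ) ∧ (u : ℕ) < (j + 1) * s'),
        C v (Function.update a i u) =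
      ∑ u ∈ Finset.univ.filter
          (fun u : Fin r => j * s' ≤ (u : ℕ) ∧ (u : ℕ) < (j + 1) * s'),
        C' v (Function.update a i u)) :
    C i = C' i := by
  have hs : 0 < s' := by omega
  funext a
  have hj : a i / s' < r / s' := Nat.div_lt_div_of_lt_of_dvd hdvd (a i).isLt
  have hcard : #(digitBlock r s' (a i / s')) + (Fintype.card (Fin n) - (#R + 1)) ≤ r := by
    have := card_digitBlock_le r s' (a i / s')
    have := i.pos
    rw [Fintype.card_fin, hR]
    omega
  have hrepD : ∀ v ∈ R, ∑ u ∈ digitBlock r s' (a i / s'), (C - C') v (update a i u) = 0 :=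
    fun v hv => by
      simp only [Pi.sub_apply, sum_sub_distrib, sub_eq_zero]
      exact hrep v hv _ hj a
  have hdiff := (Construction1.IsCodeword.sub hC hC').eq_zero_of_sum_update_eq_zero hdist hiR
    hcard a hrepD (a i) (mem_digitBlock_div hs (a i))
  simpa [sub_eq_zero] using hdiff

/-- Construction 1 has the `d`-optimal repair property whenever
`s' = d + 1 - k` divides `r = n - k`: node `i` is determined by the block sums
`∑_{u ∈ I_j} c_{v,a(i,u)}` over consecutive blocks `I_j` of length `s'`,
downloaded from any `d` helpers. -/
theorem construction1_d_optimal_repair_of_dvd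
    (F : Type*) [Field F] (n r : ℕ) (hr : 1 ≤ r) (hrn : r < n)
    (lam : Fin n → Fin r → F)
    (hdist : Function.Injective fun p : Fin n × Fin r => lam p.1 p.2)
    (C C' : Fin n → (Fin n → Fin r) → F)
    (hC : ∀ t < r, ∀ a : Fin n → Fin r, ∑ i, lam i (a i) ^ t * C i a = 0)
    (hC' : ∀ t < r, ∀ a : Fin n → Fin r, ∑ i, lam i (a i) ^ t * C' i a = 0)
    (d s' : ℕ) (hd1 : n - r ≤ d) (hd2 : d ≤ n - 1)
    (hs' : s' = d + 1 - (n - r)) (hdvd : s' ∣ r)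
    (i : Fin n) (R : Finset (Fin n)) (hiR : i ∉ R) (hR : R.card = d)
    (hrep : ∀ v ∈ R, ∀ j < r / s', ∀ a : Fin n → Fin r,
      ∑ u ∈ Finset.univ.filter
          (fun u : Fin r => j * s' ≤ (u : ℕ) ∧ (u : ℕ) < (j + 1) * s'),
        C v (Function.update a i u) =
      ∑ u ∈ Finset.univ.filter
          (fun u : Fin r => j * s' ≤ (u : ℕ) ∧ (u : ℕ) < (j + 1) * s'),
        C' v (Function.update a i u)) :
    C i = C' i :=
  construction1_d_optimal_repair_of_dvd_general F n r lam hdist C C' hC hC' d s' hd1 hd2 hs' hdvd i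
    R hiR hR hrep
end

section
/- Let h ≥ 1 and k ≤ d be integers and let s be a positive integer divisible by d − k + i for every i ∈ {1,…,h}. Then the number N of strings a = (a_1,…,a_h) ∈ {0,…,s−1}^h such that (d − k + i) divides a_i for at least one index i ∈ {1,…,h} satisfies (h + d − k)·N = h·s^h. Equivalently, N = s^h − ∏_{i=1}^h (s − s/(d−k+i)), and the fraction of such strings equals h/(h+d−k). -/
lemma count_multiples (s m : ℕ) (hm : 0 < m) (hms : m ∣ s) :
    (Finset.univ.filter (fun x : Fin s => m ∣ (x : ℕ))).card = s / m := by
  rw [show s / m = (Finset.range (s / m)).card from (Finset.card_range _).symm]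
  refine Finset.card_bij' (fun x _ => (x : ℕ) / m)
      (fun y hy => (⟨m * y, ?_⟩ : Fin s)) ?_ ?_ ?_ ?_
  · calc m * y < m * (s / m) :=
        (Nat.mul_lt_mul_left hm).mpr (Finset.mem_range.mp hy)
      _ = s := Nat.mul_div_cancel' hms
  · intro x hx
    simp only [Finset.mem_filter, Finset.mem_univ, true_and] at hx
    exact Finset.mem_range.mpr (Nat.div_lt_div_of_lt_of_dvd hms x.isLt)
  · intro y hy
    simp [Nat.dvd_mul_right]
  · intro x hx
    simp only [Finset.mem_filter, Finset.mem_univ, true_and] at hx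
    apply Fin.ext
    simp [Nat.mul_div_cancel' hx]
  · intro y hy
    simp [Nat.mul_div_cancel_left _ hm]

lemma key_prod (m s : ℕ) : ∀ n, (∀ i < n, (m + i + 1) ∣ s) →
    (m + n) * ∏ i ∈ Finset.range n, (s - s / (m + i + 1)) = m * s ^ n := by
  intro n
  induction n with
  | zero => simp
  | succ n ih =>
    intro hd
    rw [Finset.prod_range_succ, pow_succ]
    have h1 : (m + n + 1) * (s - s / (m + n + 1)) = (m + n) * s := by
      rw [Nat.mul_sub, Nat.mul_div_cancel' (hd n (Nat.lt_succ_self n)),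
        add_mul, one_mul, Nat.add_sub_cancel]
    calc (m + (n + 1)) * ((∏ i ∈ Finset.range n, (s - s / (m + i + 1))) * (s - s / (m + n + 1)))
        = ((m + n + 1) * (s - s / (m + n + 1))) * ∏ i ∈ Finset.range n, (s - s / (m + i + 1)) := by
          ring
      _ = s * ((m + n) * ∏ i ∈ Finset.range n, (s - s / (m + i + 1))) := by rw [h1]; ring
      _ = m * (s ^ n * s) := by rw [ih (fun i hi => hd i (hi.trans (Nat.lt_succ_self n)))]; ring

lemma final_arith (h dk N C S : ℕ) (hsum : N + C = S)
    (hprod : (dk + h) * C = dk * S) :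
    (h + dk) * N = h * S ∧ N = S - C := by
  refine ⟨?_, by omega⟩
  have e1 : dk * S + (dk + h) * N = dk * S + h * S := by
    calc dk * S + (dk + h) * N = (dk + h) * (N + C) := by rw [← hprod]; ring
      _ = dk * S + h * S := by rw [hsum]; ring
  have e2 := Nat.add_left_cancel e1
  rw [Nat.add_comm h dk]; exact e2

open Classical in
/-- Counting identity: if `s` is divisible by `d - k + i` for every `i ∈ {1,…,h}`,
then the number `N` of strings `a ∈ {0,…,s-1}^h` such that `(d - k + i) ∣ a_i` for
at least one `i` satisfies `(h + d - k) · N = h · s^h`, and equivalently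
`N = s^h - ∏_{i=1}^h (s - s/(d-k+i))`. -/
theorem repair_access_counting_identity
    (h d k s : ℕ) (hh : 1 ≤ h) (hkd : k ≤ d) (hs : 0 < s)
    (hdvd : ∀ i : Fin h, (d - k + (i : ℕ) + 1) ∣ s) :
    (h + d - k) *
      (Finset.univ.filter (fun a : Fin h → Fin s =>
        ∃ i : Fin h, (d - k + (i : ℕ) + 1) ∣ (a i : ℕ))).card = h * s ^ h ∧
    (Finset.univ.filter (fun a : Fin h → Fin s =>
        ∃ i : Fin h, (d - k + (i : ℕ) + 1) ∣ (a i : ℕ))).card =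
      s ^ h - ∏ i : Fin h, (s - s / (d - k + (i : ℕ) + 1)) := by
  have hC : (Finset.univ.filter (fun a : Fin h → Fin s =>
      ¬ ∃ i : Fin h, (d - k + (i : ℕ) + 1) ∣ (a i : ℕ))).card =
      ∏ i : Fin h, (s - s / (d - k + (i : ℕ) + 1)) := by
    have heq : (Finset.univ.filter (fun a : Fin h → Fin s =>
        ¬ ∃ i : Fin h, (d - k + (i : ℕ) + 1) ∣ (a i : ℕ))) =
        Fintype.piFinset (fun i : Fin h =>
          Finset.univ.filter (fun x : Fin s => ¬ (d - k + (i : ℕ) + 1) ∣ (x : ℕ))) := by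
      ext a
      simp [Fintype.mem_piFinset]
    rw [heq, Fintype.card_piFinset]
    refine Finset.prod_congr rfl (fun i _ => ?_)
    have h2 := Finset.card_filter_add_card_filter_not
      (s := (Finset.univ : Finset (Fin s))) (fun x : Fin s => (d - k + (i : ℕ) + 1) ∣ (x : ℕ))
    rw [count_multiples s (d - k + (i : ℕ) + 1) (Nat.succ_pos _) (hdvd i)] at h2
    simp only [Finset.card_univ, Fintype.card_fin] at h2
    omega
  have hsum : (Finset.univ.filter (fun a : Fin h → Fin s =>
      ∃ i : Fin h, (d - k + (i : ℕ) + 1) ∣ (a i : ℕ))).card +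
      ∏ i : Fin h, (s - s / (d - k + (i : ℕ) + 1)) = s ^ h := by
    rw [← hC]
    have h2 := Finset.card_filter_add_card_filter_not
      (s := (Finset.univ : Finset (Fin h → Fin s)))
      (fun a : Fin h → Fin s => ∃ i : Fin h, (d - k + (i : ℕ) + 1) ∣ (a i : ℕ))
    rw [h2]
    simp
  have hprod : (d - k + h) * ∏ i : Fin h, (s - s / (d - k + (i : ℕ) + 1)) =
      (d - k) * s ^ h := by
    have hrange : (∏ i : Fin h, (s - s / (d - k + (i : ℕ) + 1))) =
        ∏ i ∈ Finset.range h, (s - s / (d - k + i + 1)) :=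
      Fin.prod_univ_eq_prod_range (fun i => s - s / (d - k + i + 1)) h
    rw [hrange]
    exact key_prod (d - k) s h (fun i hi => hdvd ⟨i, hi⟩)
  have hhdk : h + d - k = h + (d - k) := Nat.add_sub_assoc hkd h
  rw [hhdk]
  exact final_arith h (d - k) _ _ _ hsum hprod
end

section
/- The code C of Construction 4 has the optimal access property for repairing any single node from all n−1 surviving nodes: (1) for every i ∈ {1,…,n−1}, any two codewords (C_1,…,C_n) and (C'_1,…,C'_n) in C satisfying c_{j,a} = c'_{j,a} for all j ≠ i and all digit strings a with a_i = 0, also satisfy C_i = C'_i; and (2) any two codewords satisfying c_{j,a} = c'_{j,a} for all j ≠ n and all digit strings a with a_1 ⊕ a_2 ⊕ ⋯ ⊕ a_{n−1} = 0 (sum modulo r), also satisfy C_n = C'_n. In each case the failed node is recovered by accessing exactly l/r coordinates from each of the n−1 helpers. -/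
open Matrix in
/-- Construction 4 has the optimal access property: (1) each node `i < n-1` is
determined by the coordinates `{c_{j,a} : a_i = 0}` of the surviving nodes, and
(2) the last node is determined by the coordinates `{c_{j,a} : a_1 ⊕ ⋯ ⊕ a_{n-1} = 0}`
of the surviving nodes. -/
theorem construction4_optimal_access
    (F : Type*) [Field F] [Fintype F]
    (n r : ℕ) (hr : 1 ≤ r) (hrn : r < n)
    (hF : n + 1 ≤ Fintype.card F)
    (γ : F) (hγprim : ∀ x : F, x ≠ 0 → ∃ m : ℕ, x = γ ^ m)
    (lam : Fin (n - 1) → Fin r → F)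
    (hlam : ∀ (i : Fin (n - 1)) (u : Fin r),
      lam i u = if (u : ℕ) = 0 then γ ^ ((i : ℕ) + 1) else 1)
    (A : Fin n → Matrix (Fin (n - 1) → Fin r) (Fin (n - 1) → Fin r) F)
    (hA : ∀ (i : Fin n) (hi : (i : ℕ) < n - 1),
      A i = Matrix.of fun a b : Fin (n - 1) → Fin r =>
        if b = Function.update a ⟨i, hi⟩
            ⟨((a ⟨i, hi⟩ : ℕ) + 1) % r, Nat.mod_lt _ hr⟩
        then lam ⟨i, hi⟩ (a ⟨i, hi⟩) else 0)
    (hAn : A ⟨n - 1, by omega⟩ = 1)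
    (C C' : Fin n → (Fin (n - 1) → Fin r) → F)
    (hC : ∀ t < r, ∑ i, (A i ^ t) *ᵥ C i = 0)
    (hC' : ∀ t < r, ∑ i, (A i ^ t) *ᵥ C' i = 0) :
    (∀ (i : Fin n) (hi : (i : ℕ) < n - 1),
      (∀ j : Fin n, j ≠ i → ∀ a : Fin (n - 1) → Fin r,
        a ⟨i, hi⟩ = ⟨0, hr⟩ → C j a = C' j a) →
      C i = C' i) ∧
    ((∀ j : Fin n, (j : ℕ) ≠ n - 1 → ∀ a : Fin (n - 1) → Fin r,
        (∑ w, (a w : ℕ)) % r = 0 → C j a = C' j a) →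
      C ⟨n - 1, by omega⟩ = C' ⟨n - 1, by omega⟩) := by
  have hn2 : 2 ≤ n := by omega
  -- γ ≠ 0
  have hγ0 : γ ≠ 0 := by
    classical
    intro hγ
    have hcard : (Finset.univ : Finset F).card ≤ ({0, 1} : Finset F).card := by
      apply Finset.card_le_card
      intro x _
      rcases eq_or_ne x 0 with h0 | h0
      · simp [h0]
      · obtain ⟨m, hm⟩ := hγprim x h0
        rcases Nat.eq_zero_or_pos m with hm0 | hm0
        · simp [hm, hm0]
        · exfalso; apply h0; rw [hm, hγ, zero_pow (by omega)]
    have h2' : ({0, 1} : Finset F).card ≤ 2 :=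
      (Finset.card_insert_le _ _).trans (by simp)
    have : Fintype.card F ≤ 2 := by
      rw [← Finset.card_univ]; exact hcard.trans h2'
    omega
  -- difference codeword
  set D : Fin n → (Fin (n - 1) → Fin r) → F := fun j => C j - C' j with hDdef
  have hD : ∀ t < r, ∀ a, ∑ j, ((A j ^ t) *ᵥ D j) a = 0 := by
    intro t ht a
    have h1 := hC t ht
    have h2 := hC' t ht
    have h3 : ∑ j, (A j ^ t) *ᵥ D j = 0 := by
      simp only [hDdef, Matrix.mulVec_sub, Finset.sum_sub_distrib, h1, h2, sub_zero]
    calc ∑ j, ((A j ^ t) *ᵥ D j) a = (∑ j, (A j ^ t) *ᵥ D j) a := by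
          rw [Finset.sum_apply]
      _ = 0 := by rw [h3]; rfl
  -- basic mulVec step
  have hstep : ∀ (j : Fin n) (hj : (j : ℕ) < n - 1)
      (x : (Fin (n - 1) → Fin r) → F) (a : Fin (n - 1) → Fin r),
      ((A j) *ᵥ x) a = lam ⟨j, hj⟩ (a ⟨j, hj⟩) *
        x (Function.update a ⟨j, hj⟩ ⟨((a ⟨j, hj⟩ : ℕ) + 1) % r, Nat.mod_lt _ hr⟩) := by
    intro j hj x a
    rw [hA j hj]
    simp only [Matrix.mulVec, dotProduct, Matrix.of_apply, ite_mul, zero_mul]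
    rw [Finset.sum_ite_eq' Finset.univ _ (fun b => lam ⟨j, hj⟩ (a ⟨j, hj⟩) * x b)]
    simp
  -- invariance lemma 1 : a j-step preserves vanishing on {a_i = 0} for j ≠ i
  have hinv1 : ∀ (i' : Fin (n - 1)) (j : Fin n) (hj : (j : ℕ) < n - 1),
      (⟨j, hj⟩ : Fin (n - 1)) ≠ i' →
      ∀ (x : (Fin (n - 1) → Fin r) → F),
      (∀ a, a i' = ⟨0, hr⟩ → x a = 0) →
      ∀ (t : ℕ) (a : Fin (n - 1) → Fin r), a i' = ⟨0, hr⟩ → ((A j ^ t) *ᵥ x) a = 0 := by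
    intro i' j hj hne x hx t
    induction t with
    | zero => intro a ha; rw [pow_zero, Matrix.one_mulVec]; exact hx a ha
    | succ t ih =>
      intro a ha
      rw [pow_succ', ← Matrix.mulVec_mulVec, hstep j hj]
      rw [ih _ (by rw [Function.update_of_ne hne.symm]; exact ha)]
      · ring
  -- power formula for the matrix of the failed node
  have hpow : ∀ (i : Fin n) (hi : (i : ℕ) < n - 1)
      (x : (Fin (n - 1) → Fin r) → F) (t : ℕ) (ht : t < r)
      (a : Fin (n - 1) → Fin r), a ⟨i, hi⟩ = ⟨0, hr⟩ →
      ((A i ^ t) *ᵥ x) a =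
        (if t = 0 then 1 else γ ^ ((i : ℕ) + 1)) * x (Function.update a ⟨i, hi⟩ ⟨t, ht⟩) := by
    intro i hi x t
    induction t generalizing x with
    | zero =>
      intro ht a ha
      rw [pow_zero, Matrix.one_mulVec]
      have : Function.update a ⟨i, hi⟩ (⟨0, ht⟩ : Fin r) = a := by
        rw [show (⟨0, ht⟩ : Fin r) = a ⟨i, hi⟩ from by rw [ha]]
        exact Function.update_eq_self _ _
      rw [this]; simp
    | succ t ih =>
      intro ht a ha
      rw [pow_succ, ← Matrix.mulVec_mulVec, ih (A i *ᵥ x) (by omega) a ha, hstep i hi]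
      have hval : (Function.update a ⟨i, hi⟩ ⟨t, by omega⟩) ⟨i, hi⟩ = ⟨t, by omega⟩ :=
        Function.update_self _ _ _
      rw [hval]
      have hupd : Function.update (Function.update a ⟨i, hi⟩ ⟨t, by omega⟩) ⟨i, hi⟩
          (⟨(((⟨t, by omega⟩ : Fin r) : ℕ) + 1) % r, Nat.mod_lt _ hr⟩ : Fin r)
          = Function.update a ⟨i, hi⟩ ⟨t + 1, ht⟩ := by
        rw [Function.update_idem]
        have heq : (⟨(((⟨t, by omega⟩ : Fin r) : ℕ) + 1) % r, Nat.mod_lt _ hr⟩ : Fin r)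
            = (⟨t + 1, ht⟩ : Fin r) := Fin.ext (Nat.mod_eq_of_lt ht)
        rw [heq]
      rw [hupd, hlam]
      rcases Nat.eq_zero_or_pos t with h0 | h0
      · subst h0; simp
      · have : t ≠ 0 := by omega
        simp [this]
  -- invariance lemma 2
  have hinv2 : ∀ (j : Fin n) (hj : (j : ℕ) < n - 1)
      (x : (Fin (n - 1) → Fin r) → F),
      (∀ a, (∑ w, ((a w : ℕ))) % r = 0 → x a = 0) →
      ∀ (t : ℕ) (a : Fin (n - 1) → Fin r),
        ((∑ w, ((a w : ℕ))) + t) % r = 0 → ((A j ^ t) *ᵥ x) a = 0 := by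
    intro j hj x hx t
    induction t with
    | zero => intro a ha; rw [pow_zero, Matrix.one_mulVec]; exact hx a (by simpa using ha)
    | succ t ih =>
      intro a ha
      rw [pow_succ', ← Matrix.mulVec_mulVec, hstep j hj]
      rw [ih _ ?_]
      · ring
      · -- digit-sum of the updated string
        set j' : Fin (n - 1) := ⟨j, hj⟩
        have hj'mem : j' ∈ (Finset.univ : Finset (Fin (n - 1))) := Finset.mem_univ _
        have hsum1 : ∑ w, ((Function.update a j'
            (⟨((a j' : ℕ) + 1) % r, Nat.mod_lt _ hr⟩ : Fin r) w : ℕ))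
            = ((a j' : ℕ) + 1) % r + ∑ w ∈ Finset.univ.erase j', ((a w : ℕ)) := by
          rw [← Finset.add_sum_erase _ _ hj'mem]
          congr 1
          · rw [Function.update_self]
          · apply Finset.sum_congr rfl
            intro w hw
            rw [Function.update_of_ne (Finset.ne_of_mem_erase hw)]
        have hsum2 : ∑ w, ((a w : ℕ)) = (a j' : ℕ) + ∑ w ∈ Finset.univ.erase j', ((a w : ℕ)) :=
          (Finset.add_sum_erase _ _ hj'mem).symm
        rw [hsum1, add_assoc, Nat.mod_add_mod]
        rw [hsum2] at ha
        rw [show (a j' : ℕ) + 1 + (∑ w ∈ Finset.univ.erase j', ((a w : ℕ)) + t)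
            = (a j' : ℕ) + ∑ w ∈ Finset.univ.erase j', ((a w : ℕ)) + (t + 1) from by ring]
        exact ha
  constructor
  · -- Part 1
    intro i hi h
    have hDvan : ∀ j : Fin n, j ≠ i → ∀ a, a ⟨i, hi⟩ = ⟨0, hr⟩ → D j a = 0 := by
      intro j hj a ha
      simp only [hDdef, Pi.sub_apply, h j hj a ha, sub_self]
    funext b
    set t : ℕ := (b ⟨i, hi⟩ : ℕ) with htdef
    have ht : t < r := (b ⟨i, hi⟩).isLt
    set a : Fin (n - 1) → Fin r := Function.update b ⟨i, hi⟩ ⟨0, hr⟩ with hadef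
    have ha : a ⟨i, hi⟩ = ⟨0, hr⟩ := Function.update_self _ _ _
    have key := hD t ht a
    have hsingle : ∑ j, ((A j ^ t) *ᵥ D j) a = ((A i ^ t) *ᵥ D i) a := by
      apply Finset.sum_eq_single i
      · intro j _ hji
        rcases eq_or_ne ((j : ℕ)) (n - 1) with hj1 | hj1
        · have hjeq : j = ⟨n - 1, by omega⟩ := Fin.ext hj1
          rw [show A j = 1 from by rw [hjeq]; exact hAn, one_pow, Matrix.one_mulVec]
          exact hDvan j hji a ha
        · have hjlt : (j : ℕ) < n - 1 := by have := j.isLt; omega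
          exact hinv1 ⟨i, hi⟩ j hjlt
            (fun hcon => hji (Fin.ext (show (j : ℕ) = (i : ℕ) by
              simpa using congrArg Fin.val hcon)))
            (D j) (fun a' ha' => hDvan j hji a' ha') t a ha
      · intro hni; exact absurd (Finset.mem_univ i) hni
    rw [hsingle, hpow i hi (D i) t ht a ha] at key
    have hupd : Function.update a ⟨i, hi⟩ (⟨t, ht⟩ : Fin r) = b := by
      rw [hadef, Function.update_idem]
      rw [show (⟨t, ht⟩ : Fin r) = b ⟨i, hi⟩ from Fin.ext rfl]
      exact Function.update_eq_self _ _
    rw [hupd] at key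
    have hscal : (if t = 0 then (1 : F) else γ ^ ((i : ℕ) + 1)) ≠ 0 := by
      split
      · exact one_ne_zero
      · exact pow_ne_zero _ hγ0
    have : D i b = 0 := by
      rcases mul_eq_zero.mp key with h' | h'
      · exact absurd h' hscal
      · exact h'
    have := this
    simpa [hDdef, sub_eq_zero] using this
  · -- Part 2
    intro h
    have hDvan : ∀ j : Fin n, (j : ℕ) ≠ n - 1 → ∀ a,
        (∑ w, ((a w : ℕ))) % r = 0 → D j a = 0 := by
      intro j hj a ha
      simp only [hDdef, Pi.sub_apply, h j hj a ha, sub_self]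
    funext b
    set s : ℕ := ∑ w, ((b w : ℕ)) with hsdef
    set t : ℕ := (r - s % r) % r with htdef
    have ht : t < r := Nat.mod_lt _ (by omega)
    have hsr : s % r < r := Nat.mod_lt _ (by omega)
    have hdm := Nat.div_add_mod s r
    have hst : s + t = r * (s / r) + r ∨ s + t = r * (s / r) := by
      rcases Nat.eq_zero_or_pos (s % r) with h0 | h0
      · right
        have : t = 0 := by rw [htdef, h0, Nat.sub_zero, Nat.mod_self]
        omega
      · left
        have : t = r - s % r := by
          rw [htdef]; exact Nat.mod_eq_of_lt (by omega)
        omega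
    have hsum0 : (s + t) % r = 0 := by
      rcases hst with h' | h'
      · rw [h', ← Nat.mul_succ, Nat.mul_mod_right]
      · rw [h', Nat.mul_mod_right]
    have key := hD t ht b
    set nl : Fin n := ⟨n - 1, by omega⟩ with hnl
    have hsingle : ∑ j, ((A j ^ t) *ᵥ D j) b = ((A nl ^ t) *ᵥ D nl) b := by
      apply Finset.sum_eq_single nl
      · intro j _ hji
        have hjlt : (j : ℕ) < n - 1 := by
          have := j.isLt
          have : (j : ℕ) ≠ n - 1 := fun hc => hji (Fin.ext hc)
          omega
        exact hinv2 j hjlt (D j)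
          (fun a' ha' => hDvan j (by omega) a' ha') t b hsum0
      · intro hni; exact absurd (Finset.mem_univ nl) hni
    rw [hsingle, hnl, hAn, one_pow, Matrix.one_mulVec] at key
    simpa [hDdef, sub_eq_zero] using key
end

section
/- Block Vandermonde criterion: let B_1,…,B_r be l×l matrices over a field F such that B_iB_j = B_jB_i for all i,j ∈ {1,…,r}. Then the rl × rl block matrix M_r whose (t,j) block (t = 0,…,r−1, j = 1,…,r) equals B_j^t is invertible if and only if B_i − B_j is invertible for all i ≠ j. -/
/-!
The commuting matrices `B_j` generate a commutative subalgebra `S` of `Matrix (Fin l) (Fin l) F`,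
over which the block Vandermonde matrix is the transpose of an ordinary Vandermonde matrix, with
determinant `∏_{i < j} (B_j - B_i)`. Since `S` and `Matrix (Fin r) (Fin r) S` are
finite-dimensional, hence Artinian, an element of either is a unit as soon as its image in the
ambient algebra is one: being a unit there amounts to being right regular, which injective maps
reflect. So invertibility may be tested in `S`, where it is read off the determinant.
-/

open Matrix

theorem IsArtinianRing.isUnit_map_iff_of_injective {A B G : Type*} [Semiring A]
    [IsArtinianRing A] [Monoid B] [FunLike G A B] [MonoidHomClass G A B] (f : G)
    (hf : Function.Injective f) {a : A} : IsUnit (f a) ↔ IsUnit a := by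
  refine ⟨fun h => ?_, IsUnit.map f⟩
  rw [isUnit_iff_isRightRegular]
  intro x y hxy
  exact hf (h.isRegular.2 (by simpa only [map_mul] using congrArg f hxy))

theorem Matrix.isUnit_vandermonde_iff {R : Type*} [CommRing R] {n : ℕ} (v : Fin n → R) :
    IsUnit (vandermonde v) ↔ ∀ i j, i ≠ j → IsUnit (v i - v j) := by
  rw [isUnit_iff_isUnit_det, det_vandermonde, IsUnit.prod_univ_iff]
  simp only [IsUnit.prod_iff, Finset.mem_Ioi]
  refine ⟨fun h i j hij => ?_, fun h i j hij => h j i hij.ne'⟩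
  rcases hij.lt_or_gt with hlt | hgt
  · simpa using (h i j hlt).neg
  · exact h j i hgt

def blockVandermonde {A : Type*} [Monoid A] {r : ℕ} (B : Fin r → A) :
    Matrix (Fin r) (Fin r) A :=
  of fun i j => B j ^ (i : ℕ)

open scoped IsMulCommutative in
theorem isUnit_blockVandermonde_iff {F A : Type*} [Field F] [Ring A] [Algebra F A]
    [FiniteDimensional F A] {r : ℕ} (B : Fin r → A) (hcomm : ∀ i j, Commute (B i) (B j)) :
    IsUnit (blockVandermonde B) ↔ ∀ i j, i ≠ j → IsUnit (B i - B j) := by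
  let S := Algebra.adjoin F (Set.range B)
  have : IsMulCommutative S := Algebra.isMulCommutative_adjoin F
    (by rintro _ ⟨i, rfl⟩ _ ⟨j, rfl⟩; exact hcomm i j)
  have : IsArtinianRing S := IsArtinianRing.of_finite F S
  have hS : Function.Injective S.val := Subtype.val_injective
  let v : Fin r → S := fun k => ⟨B k, Algebra.subset_adjoin ⟨k, rfl⟩⟩
  have hV : (S.val : S →+* A).mapMatrix (vandermonde v)ᵀ = blockVandermonde B := by
    ext i j
    simp [v, vandermonde, blockVandermonde]
  rw [← hV, IsArtinianRing.isUnit_map_iff_of_injective _ (map_injective hS), isUnit_transpose,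
    isUnit_vandermonde_iff]
  simp only [← IsArtinianRing.isUnit_map_iff_of_injective S.val hS, map_sub]
  rfl

theorem block_vandermonde_invertible_iff_general
    (F : Type*) [Field F] (l r : ℕ)
    (B : Fin r → Matrix (Fin l) (Fin l) F)
    (hcomm : ∀ i j, B i * B j = B j * B i) :
    IsUnit (Matrix.of fun p q : Fin r × Fin l => (B q.1 ^ (p.1 : ℕ)) p.2 q.2) ↔
      ∀ i j : Fin r, i ≠ j → IsUnit (B i - B j) := by
  have hflat : (Matrix.of fun p q : Fin r × Fin l => (B q.1 ^ (p.1 : ℕ)) p.2 q.2) =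
      compRingEquiv (Fin r) (Fin l) F (blockVandermonde B) := rfl
  rw [hflat, isUnit_map_iff, isUnit_blockVandermonde_iff (F := F) B hcomm]

/-- Block Vandermonde criterion: for pairwise commuting `l×l` matrices
`B_1,…,B_r`, the `rl × rl` block Vandermonde matrix with `(t,j)` block `B_j^t`
is invertible iff `B_i - B_j` is invertible for all `i ≠ j`. -/
theorem block_vandermonde_invertible_iff
    (F : Type*) [Field F] (l r : ℕ) (hl : 0 < l) (hr : 0 < r)
    (B : Fin r → Matrix (Fin l) (Fin l) F)
    (hcomm : ∀ i j, B i * B j = B j * B i) :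
    IsUnit (Matrix.of fun p q : Fin r × Fin l => (B q.1 ^ (p.1 : ℕ)) p.2 q.2) ↔
      ∀ i j : Fin r, i ≠ j → IsUnit (B i - B j) :=
  block_vandermonde_invertible_iff_general F l r B hcomm
end

section
/- Let F be a field and for i ∈ {1,…,n−1} let λ_{i,0},…,λ_{i,r−1} be nonzero elements of F such that the products π_i := ∏_{u=0}^{r−1} λ_{i,u} are pairwise distinct and π_i ≠ 1 for every i. Define, for i ∈ {1,…,n−1}, the l×l matrix A_i (l = r^{n−1}) whose (a,b) entry equals λ_{i,a_i} if b = a(i, a_i ⊕ 1) and 0 otherwise, and set A_n = I. Then (1) A_iA_j = A_jA_i for all i, j ∈ {1,…,n}; and (2) A_i − A_j is invertible for all i ≠ j in {1,…,n} (including the case j = n, i.e., A_i − I is invertible for i ≤ n−1). -/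
namespace C4Aux

variable {F : Type*} [Field F] {ι : Type*} [DecidableEq ι] [Fintype ι] {r : ℕ}

def shiftMat (hr : 0 < r) (i : ι) (lam : Fin r → F) :
    Matrix (ι → Fin r) (ι → Fin r) F :=
  Matrix.of fun a b =>
    if b = Function.update a i ⟨((a i : ℕ) + 1) % r, Nat.mod_lt _ hr⟩
    then lam (a i) else 0

lemma shiftMat_pow (hr : 0 < r) (i : ι) (lam : Fin r → F) (k : ℕ) :
    shiftMat hr i lam ^ k = Matrix.of fun a b =>
      if b = Function.update a i ⟨((a i : ℕ) + k) % r, Nat.mod_lt _ hr⟩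
      then ∏ m ∈ Finset.range k, lam ⟨((a i : ℕ) + m) % r, Nat.mod_lt _ hr⟩ else 0 := by
  induction k with
  | zero =>
      ext a b
      have h1 : ∀ h, (⟨((a i : ℕ)) % r, h⟩ : Fin r) = a i := by
        intro h; ext; simp [Nat.mod_eq_of_lt (a i).isLt]
      simp [Matrix.one_apply, h1, Function.update_eq_self, eq_comm]
  | succ k ih =>
      rw [pow_succ, ih]
      ext a c
      simp only [Matrix.mul_apply, Matrix.of_apply, ite_mul, zero_mul,
        Finset.sum_ite_eq', Finset.mem_univ, if_true]
      simp only [shiftMat, Matrix.of_apply, Function.update_self, Function.update_idem]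
      have h2 : (((a i : ℕ) + k) % r + 1) % r = ((a i : ℕ) + (k + 1)) % r := by
        rw [Nat.mod_add_mod, add_assoc]
      rw [Finset.prod_range_succ]
      simp only [h2, mul_ite, mul_zero]


lemma shiftMat_pow_r (hr : 0 < r) (i : ι) (lam : Fin r → F) :
    shiftMat hr i lam ^ r = (∏ u : Fin r, lam u) • 1 := by
  rw [shiftMat_pow]
  ext a b
  have h1 : ∀ h, (⟨((a i : ℕ)) % r, h⟩ : Fin r) = a i := by
    intro h; ext; simp [Nat.mod_eq_of_lt (a i).isLt]
  have h2 : ∏ m ∈ Finset.range r, lam ⟨((a i : ℕ) + m) % r, Nat.mod_lt _ hr⟩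
      = ∏ u : Fin r, lam u := by
    rw [← Fin.prod_univ_eq_prod_range]
    refine Fintype.prod_bijective
      (fun m : Fin r => (⟨((a i : ℕ) + (m : ℕ)) % r, Nat.mod_lt _ hr⟩ : Fin r))
      ?_ (fun m : Fin r => lam ⟨((a i : ℕ) + (m : ℕ)) % r, Nat.mod_lt _ hr⟩)
      lam (fun m => rfl)
    refine Finite.injective_iff_bijective.mp ?_
    intro m1 m2 h
    have h' : ((a i : ℕ) + (m1 : ℕ)) % r = ((a i : ℕ) + (m2 : ℕ)) % r :=
      congrArg Fin.val h
    have h'' : (m1 : ℕ) % r = (m2 : ℕ) % r := Nat.ModEq.add_left_cancel' _ h'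
    ext
    rwa [Nat.mod_eq_of_lt m1.isLt, Nat.mod_eq_of_lt m2.isLt] at h''
  simp [h1, h2, Function.update_eq_self, Matrix.one_apply, eq_comm]

lemma shiftMat_comm (hr : 0 < r) {i j : ι} (hij : i ≠ j) (li lj : Fin r → F) :
    shiftMat hr i li * shiftMat hr j lj = shiftMat hr j lj * shiftMat hr i li := by
  ext a c
  simp only [Matrix.mul_apply, shiftMat, Matrix.of_apply, ite_mul, zero_mul,
    Finset.sum_ite_eq', Finset.mem_univ, if_true,
    Function.update_of_ne hij, Function.update_of_ne hij.symm]
  rw [Function.update_comm hij]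
  simp only [mul_ite, mul_zero]
  split_ifs with h
  · ring
  · rfl

end C4Aux

/-- Matrix lemma for Construction 4: if the `λ_{i,u}` are nonzero, the products
`π_i = ∏_u λ_{i,u}` are pairwise distinct and `π_i ≠ 1`, then the generalized
permutation matrices `A_1,…,A_{n-1}` together with `A_n = I` pairwise commute
and have invertible pairwise differences. -/
theorem construction4_matrices_commute_and_differences_invertible
    (F : Type*) [Field F] (n r : ℕ) (hr : 1 ≤ r) (hn : 2 ≤ n)
    (lam : Fin (n - 1) → Fin r → F)
    (hne : ∀ (i : Fin (n - 1)) (u : Fin r), lam i u ≠ 0)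
    (hdistinct : ∀ i j : Fin (n - 1), i ≠ j →
      ∏ u : Fin r, lam i u ≠ ∏ u : Fin r, lam j u)
    (hone : ∀ i : Fin (n - 1), ∏ u : Fin r, lam i u ≠ 1)
    (A : Fin n → Matrix (Fin (n - 1) → Fin r) (Fin (n - 1) → Fin r) F)
    (hA : ∀ (i : Fin n) (hi : (i : ℕ) < n - 1),
      A i = Matrix.of fun a b : Fin (n - 1) → Fin r =>
        if b = Function.update a ⟨i, hi⟩
            ⟨((a ⟨i, hi⟩ : ℕ) + 1) % r, Nat.mod_lt _ hr⟩
        then lam ⟨i, hi⟩ (a ⟨i, hi⟩) else 0)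
    (hAn : A ⟨n - 1, by omega⟩ = 1) :
    (∀ i j : Fin n, A i * A j = A j * A i) ∧
    (∀ i j : Fin n, i ≠ j → IsUnit (A i - A j)) := by
  classical
  have hr' : 0 < r := hr
  have hA' : ∀ (i : Fin n) (hi : (i : ℕ) < n - 1),
      A i = C4Aux.shiftMat hr' ⟨i, hi⟩ (lam ⟨i, hi⟩) := hA
  have hlast : ∀ i : Fin n, ¬ (i : ℕ) < n - 1 → A i = 1 := by
    intro i h
    have hi := i.isLt
    have : i = ⟨n - 1, by omega⟩ := Fin.ext (by simp; omega)
    rw [this, hAn]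
  have hcomm : ∀ i j : Fin n, A i * A j = A j * A i := by
    intro i j
    by_cases hi : (i : ℕ) < n - 1
    · by_cases hj : (j : ℕ) < n - 1
      · by_cases hij : (⟨i, hi⟩ : Fin (n - 1)) = ⟨j, hj⟩
        · have : i = j := Fin.ext (Fin.mk_eq_mk.mp hij)
          rw [this]
        · rw [hA' i hi, hA' j hj, C4Aux.shiftMat_comm hr' hij]
      · rw [hlast j hj, mul_one, one_mul]
    · rw [hlast i hi, mul_one, one_mul]
  set p : Fin n → F := fun i =>
    if h : (i : ℕ) < n - 1 then ∏ u : Fin r, lam ⟨i, h⟩ u else 1 with hp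
  have hpow : ∀ i : Fin n, A i ^ r = p i • 1 := by
    intro i
    by_cases hi : (i : ℕ) < n - 1
    · rw [hA' i hi, C4Aux.shiftMat_pow_r hr', hp]
      simp [hi]
    · rw [hlast i hi, one_pow, hp]
      simp [hi]
  have hpne : ∀ i j : Fin n, i ≠ j → p i ≠ p j := by
    intro i j hij
    by_cases hi : (i : ℕ) < n - 1 <;> by_cases hj : (j : ℕ) < n - 1 <;>
      simp only [hp, dif_pos, dif_neg, hi, hj]
    · exact hdistinct ⟨i, hi⟩ ⟨j, hj⟩
        (fun h => hij (Fin.ext (Fin.mk_eq_mk.mp h)))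
    · exact hone _
    · exact fun h => hone _ h.symm
    · exact absurd (Fin.ext (by omega : (i : ℕ) = j)) hij
  refine ⟨hcomm, ?_⟩
  intro i j hij
  have hc : Commute (A i) (A j) := hcomm i j
  have key : (∑ k ∈ Finset.range r, A i ^ k * A j ^ (r - 1 - k)) * (A i - A j)
      = (p i - p j) • (1 : Matrix (Fin (n - 1) → Fin r) (Fin (n - 1) → Fin r) F) := by
    rw [Commute.geom_sum₂_mul hc, hpow, hpow, sub_smul]
  have hne0 : p i - p j ≠ 0 := sub_ne_zero.mpr (hpne i j hij)
  have h1 : ((p i - p j)⁻¹ • ∑ k ∈ Finset.range r, A i ^ k * A j ^ (r - 1 - k))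
      * (A i - A j) = 1 := by
    rw [smul_mul_assoc, key, smul_smul, inv_mul_cancel₀ hne0, one_smul]
  exact ⟨⟨A i - A j, _, mul_eq_one_comm.mp h1, h1⟩, rfl⟩
end

section
/- The code C of Construction 5 has the universally error-resilient d-optimal access property: let t ≥ 0 be an integer, i ∈ {1,…,n}, and R ⊆ {1,…,n}∖{i} with |R| = d + 2t ≤ n − 1. Suppose values ẽ_{j,a} ∈ F are given for each j ∈ R and each digit string a with a_i = 0. If (C_1,…,C_n) and (C'_1,…,C'_n) are codewords of C such that the set {j ∈ R : ∃ a with a_i = 0 and c_{j,a} ≠ ẽ_{j,a}} has size at most t, and likewise the set {j ∈ R : ∃ a with a_i = 0 and c'_{j,a} ≠ ẽ_{j,a}} has size at most t, then C_i = C'_i. (Node i is uniquely recoverable by accessing only the l/s coordinates with a_i = 0 of each of any d+2t helpers, even if up to t helpers are erroneous; equivalently, the restricted vectors (c_{j,a})_{a_i=0}, j ≠ i, form an (n−1, d, l/s) MDS array code.) -/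
open Matrix Classical in
/-- Construction 5 has the universally error-resilient `d`-optimal access
property: node `i` is uniquely determined by the coordinates `{c_{j,a} : a_i = 0}`
accessed in any `d + 2t` helpers, even if up to `t` of the helpers are erroneous. -/
theorem construction5_UER_d_optimal_access
    (F : Type*) [Field F] [Fintype F]
    (n r d s t : ℕ) (hr : 1 ≤ r) (hrn : r < n)
    (hd1 : n - r ≤ d) (hd2 : d ≤ n - 1) (hs : s = d + 1 - (n - r))
    (hF : n + 1 ≤ Fintype.card F)
    (γ : F) (hγprim : ∀ x : F, x ≠ 0 → ∃ m : ℕ, x = γ ^ m)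
    (lam : Fin n → Fin s → F)
    (hlam : ∀ (i : Fin n) (u : Fin s),
      lam i u = if (u : ℕ) = 0 then γ ^ ((i : ℕ) + 1) else 1)
    (A : Fin n → Matrix (Fin n → Fin s) (Fin n → Fin s) F)
    (hA : ∀ i : Fin n,
      A i = Matrix.of fun a b : Fin n → Fin s =>
        if b = Function.update a i
            ⟨((a i : ℕ) + 1) % s, Nat.mod_lt _ (by omega)⟩
        then lam i (a i) else 0)
    (C C' : Fin n → (Fin n → Fin s) → F)
    (hC : ∀ t' < r, ∑ i, (A i ^ t') *ᵥ C i = 0)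
    (hC' : ∀ t' < r, ∑ i, (A i ^ t') *ᵥ C' i = 0)
    (i : Fin n) (R : Finset (Fin n)) (hiR : i ∉ R)
    (hR : R.card = d + 2 * t) (hRn : d + 2 * t ≤ n - 1)
    (et : Fin n → (Fin n → Fin s) → F)
    (herr : (R.filter fun j => ∃ a : Fin n → Fin s,
      (a i : ℕ) = 0 ∧ C j a ≠ et j a).card ≤ t)
    (herr' : (R.filter fun j => ∃ a : Fin n → Fin s,
      (a i : ℕ) = 0 ∧ C' j a ≠ et j a).card ≤ t) :
    C i = C' i := by
  -- Step 0: extract a set S of at least d helpers on which C and C' agree on the slice,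
  -- then clear the filter hypotheses (they confuse `omega`).
  obtain ⟨S, hSR, hSd, hvan0⟩ : ∃ S : Finset (Fin n), S ⊆ R ∧ d ≤ S.card ∧
      ∀ j ∈ S, ∀ a : Fin n → Fin s, (a i : ℕ) = 0 → C j a = C' j a := by
    refine ⟨R \ ((R.filter fun j => ∃ a : Fin n → Fin s,
        (a i : ℕ) = 0 ∧ C j a ≠ et j a) ∪ (R.filter fun j => ∃ a : Fin n → Fin s,
        (a i : ℕ) = 0 ∧ C' j a ≠ et j a)), Finset.sdiff_subset, ?_, ?_⟩
    · have hsub : ((R.filter fun j => ∃ a : Fin n → Fin s,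
          (a i : ℕ) = 0 ∧ C j a ≠ et j a) ∪ (R.filter fun j => ∃ a : Fin n → Fin s,
          (a i : ℕ) = 0 ∧ C' j a ≠ et j a)) ⊆ R :=
        Finset.union_subset (Finset.filter_subset _ _) (Finset.filter_subset _ _)
      rw [Finset.card_sdiff_of_subset hsub, hR]
      have h2 : ((R.filter fun j => ∃ a : Fin n → Fin s,
          (a i : ℕ) = 0 ∧ C j a ≠ et j a) ∪ (R.filter fun j => ∃ a : Fin n → Fin s,
          (a i : ℕ) = 0 ∧ C' j a ≠ et j a)).card ≤ t + t :=
        (Finset.card_union_le _ _).trans (add_le_add herr herr')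
      have h3 := Nat.sub_le_sub_left h2 (d + 2 * t)
      have h4 : d + 2 * t - (t + t) = d := by rw [two_mul, Nat.add_sub_cancel]
      exact le_trans (le_of_eq h4.symm) h3
    · intro j hj a ha
      rw [Finset.mem_sdiff, Finset.mem_union] at hj
      push_neg at hj
      obtain ⟨hjR, h1, h2⟩ := hj
      have e1 : C j a = et j a := by
        by_contra hne
        exact h1 (Finset.mem_filter.mpr ⟨hjR, ⟨a, ha, hne⟩⟩)
      have e2 : C' j a = et j a := by
        by_contra hne
        exact h2 (Finset.mem_filter.mpr ⟨hjR, ⟨a, ha, hne⟩⟩)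
      rw [e1, e2]
  clear herr herr'
  have hs0 : 0 < s := by omega
  -- γ is nonzero
  have hγ0 : γ ≠ 0 := by
    have h3 : 3 ≤ Fintype.card F := by omega
    have hne : ((Finset.univ : Finset F) \ {0, 1}).Nonempty := by
      apply Finset.card_pos.mp
      have h1 : ({(0:F), 1} : Finset F).card ≤ 2 := by
        apply (Finset.card_insert_le _ _).trans; simp
      have h2 := Finset.le_card_sdiff ({(0:F),1} : Finset F) Finset.univ
      have h4 : (Finset.univ : Finset F).card = Fintype.card F := Finset.card_univ
      omega
    obtain ⟨x, hx⟩ := hne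
    rw [Finset.mem_sdiff, Finset.mem_insert, Finset.mem_singleton] at hx
    push_neg at hx
    obtain ⟨m, hm⟩ := hγprim x hx.2.1
    intro hγ
    rw [hγ] at hm
    cases m with
    | zero => simp at hm; exact hx.2.2 hm
    | succ m => rw [zero_pow (by omega)] at hm; exact hx.2.1 hm
  -- distinct powers of γ
  have hγpow : ∀ p q : ℕ, 1 ≤ p → p < q → q ≤ n → γ ^ p ≠ γ ^ q := by
    intro p q hp hpq hq hEq
    have hge : γ ^ (q - p) = 1 := by
      have hq' : γ ^ q = γ ^ p * γ ^ (q - p) := by rw [← pow_add]; congr 1; omega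
      rw [hq'] at hEq
      exact (mul_left_cancel₀ (pow_ne_zero p hγ0) (by rw [mul_one]; exact hEq)).symm
    have hsub : (Finset.univ.erase (0:F)) ⊆
        (Finset.range (q - p)).image (fun m => γ ^ m) := by
      intro x hx
      have hx0 : x ≠ 0 := Finset.ne_of_mem_erase hx
      obtain ⟨m, hm⟩ := hγprim x hx0
      refine Finset.mem_image.mpr ⟨m % (q - p),
        Finset.mem_range.mpr (Nat.mod_lt _ (by omega)), ?_⟩
      rw [hm]
      conv_rhs => rw [show m = (q - p) * (m / (q - p)) + m % (q - p) from
        (Nat.div_add_mod m (q - p)).symm]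
      rw [pow_add, pow_mul, hge, one_pow, one_mul]
    have h1 := Finset.card_le_card hsub
    have h2 : (((Finset.range (q - p)).image (fun m => γ ^ m))).card ≤ q - p :=
      (Finset.card_image_le).trans (by simp)
    have h3 : (Finset.univ.erase (0:F)).card = Fintype.card F - 1 := by
      rw [Finset.card_erase_of_mem (Finset.mem_univ _), Finset.card_univ]
    omega
  have hγpowFin : ∀ j k : Fin n, j ≠ k → γ ^ ((j:ℕ)+1) ≠ γ ^ ((k:ℕ)+1) := by
    intro j k hjk
    rcases lt_trichotomy (j:ℕ) (k:ℕ) with h | h | h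
    · exact hγpow ((j:ℕ)+1) ((k:ℕ)+1) (by omega) (by omega) (by have := k.isLt; omega)
    · exact absurd (Fin.ext h) hjk
    · exact (hγpow ((k:ℕ)+1) ((j:ℕ)+1) (by omega) (by omega)
        (by have := j.isLt; omega)).symm
  -- updating the same coordinate with equal values
  have xupd : ∀ (x : (Fin n → Fin s) → F) (a : Fin n → Fin s) (j : Fin n)
      (v w : ℕ) (hv : v < s) (hw : w < s), v = w →
      x (Function.update a j ⟨v, hv⟩) = x (Function.update a j ⟨w, hw⟩) := by
    intro x a j v w hv hw h
    subst h
    rfl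
  -- basic action of A j
  have step : ∀ (j : Fin n) (x : (Fin n → Fin s) → F) (a : Fin n → Fin s),
      (A j *ᵥ x) a = lam j (a j) *
        x (Function.update a j ⟨((a j : ℕ) + 1) % s, Nat.mod_lt _ hs0⟩) := by
    intro j x a
    rw [hA j]
    simp only [Matrix.mulVec, dotProduct, Matrix.of_apply, ite_mul, zero_mul,
      Finset.sum_ite_eq', Finset.mem_univ, if_true]
  -- powers applied at a row position not wrapping past 0
  have pw1 : ∀ (j : Fin n) (t' : ℕ) (x : (Fin n → Fin s) → F) (a : Fin n → Fin s),
      1 ≤ (a j : ℕ) → (a j : ℕ) + t' ≤ s →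
      (A j ^ t' *ᵥ x) a =
        x (Function.update a j ⟨((a j : ℕ) + t') % s, Nat.mod_lt _ hs0⟩) := by
    intro j t'
    induction t' with
    | zero =>
      intro x a h1 h2
      rw [pow_zero, Matrix.one_mulVec]
      have hv : (⟨((a j : ℕ) + 0) % s, Nat.mod_lt _ hs0⟩ : Fin s) = a j :=
        Fin.ext (by simp [Nat.mod_eq_of_lt (a j).isLt])
      rw [hv, Function.update_eq_self]
    | succ t' ih =>
      intro x a h1 h2
      rw [pow_succ', ← Matrix.mulVec_mulVec, step]
      rw [hlam j (a j), if_neg (by omega), one_mul]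
      by_cases hc : (a j : ℕ) + 1 < s
      · have ha' : ((Function.update a j
            (⟨((a j : ℕ) + 1) % s, Nat.mod_lt _ hs0⟩ : Fin s)) j : ℕ) = (a j : ℕ) + 1 := by
          rw [Function.update_self]; exact Nat.mod_eq_of_lt hc
        rw [ih x _ (by omega) (by omega)]
        simp only [ha']
        rw [Function.update_idem]
        exact xupd x a j _ _ (Nat.mod_lt _ hs0) (Nat.mod_lt _ hs0)
          (by rw [show (a j : ℕ) + 1 + t' = (a j : ℕ) + (t' + 1) from by omega])
      · have hs' : (a j : ℕ) + 1 = s := by have := (a j).isLt; omega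
        have ht : t' = 0 := by omega
        subst ht
        rw [pow_zero, Matrix.one_mulVec]
  -- powers applied at a row position equal to 0
  have pw0 : ∀ (j : Fin n) (t' : ℕ) (x : (Fin n → Fin s) → F) (a : Fin n → Fin s),
      (a j : ℕ) = 0 → t' ≤ s →
      (A j ^ t' *ᵥ x) a = (if t' = 0 then 1 else γ ^ ((j:ℕ)+1)) *
        x (Function.update a j ⟨t' % s, Nat.mod_lt _ hs0⟩) := by
    intro j t' x a h0 hts
    match t', hts with
    | 0, _ =>
      rw [pow_zero, Matrix.one_mulVec, if_pos rfl, one_mul]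
      have hv : (⟨0 % s, Nat.mod_lt _ hs0⟩ : Fin s) = a j :=
        Fin.ext (by show 0 % s = ((a j : ℕ)); rw [Nat.zero_mod]; exact h0.symm)
      rw [hv, Function.update_eq_self]
    | (t'+1), hts =>
      rw [pow_succ', ← Matrix.mulVec_mulVec, step]
      rw [hlam j (a j), if_pos h0]
      rw [if_neg (Nat.succ_ne_zero t')]
      by_cases hs1 : s = 1
      · have ht0 : t' = 0 := by omega
        subst ht0
        rw [pow_zero, Matrix.one_mulVec]
        exact congrArg (γ ^ ((j:ℕ)+1) * ·)
          (xupd x a j _ _ (Nat.mod_lt _ hs0) (Nat.mod_lt _ hs0) (by rw [h0]))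
      · have h2s : 2 ≤ s := by omega
        have ha' : ((Function.update a j
            (⟨((a j : ℕ) + 1) % s, Nat.mod_lt _ hs0⟩ : Fin s)) j : ℕ) = 1 := by
          rw [Function.update_self]
          simp [h0, Nat.mod_eq_of_lt h2s]
        rw [pw1 j t' x _ (by omega) (by omega)]
        simp only [ha']
        rw [Function.update_idem]
        exact congrArg (γ ^ ((j:ℕ)+1) * ·)
          (xupd x a j _ _ (Nat.mod_lt _ hs0) (Nat.mod_lt _ hs0)
            (by rw [Nat.add_comm 1 t']))
  -- matrix extensionality via mulVec
  have mat_ext : ∀ (M N : Matrix (Fin n → Fin s) (Fin n → Fin s) F),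
      (∀ x, M *ᵥ x = N *ᵥ x) → M = N := by
    intro M N h
    ext a b
    have h2 := congrFun (h (Pi.single b 1)) a
    simpa [Matrix.mulVec_single] using h2
  -- the cyclic property : A j ^ s = γ^(j+1) • 1
  have hA_cyc : ∀ j : Fin n,
      A j ^ s = γ ^ ((j:ℕ)+1) • (1 : Matrix (Fin n → Fin s) (Fin n → Fin s) F) := by
    intro j
    apply mat_ext
    intro x
    funext a
    have hvec : (A j ^ s *ᵥ x) a = γ ^ ((j:ℕ)+1) * x a := by
      by_cases h0 : (a j : ℕ) = 0
      · rw [pw0 j s x a h0 le_rfl, if_neg (by omega)]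
        have hv : (⟨s % s, Nat.mod_lt _ hs0⟩ : Fin s) = a j :=
          Fin.ext (by show s % s = ((a j : ℕ)); rw [Nat.mod_self]; exact h0.symm)
        rw [hv, Function.update_eq_self]
      · have hlt := (a j).isLt
        have hpows : A j ^ s = A j ^ (s - (a j : ℕ)) * A j ^ ((a j : ℕ)) := by
          rw [← pow_add]; congr 1; omega
        rw [hpows, ← Matrix.mulVec_mulVec]
        rw [pw1 j (s - (a j : ℕ)) _ a (by omega) (by omega)]
        have hb0 : ((Function.update a j
            (⟨((a j : ℕ) + (s - (a j : ℕ))) % s, Nat.mod_lt _ hs0⟩ : Fin s)) j : ℕ) = 0 := by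
          rw [Function.update_self]
          show ((a j : ℕ) + (s - (a j : ℕ))) % s = 0
          rw [show (a j : ℕ) + (s - (a j : ℕ)) = s from by omega, Nat.mod_self]
        rw [pw0 j ((a j : ℕ)) x _ hb0 (le_of_lt hlt)]
        rw [if_neg (by omega)]
        rw [Function.update_idem]
        have hv : (⟨((a j : ℕ)) % s, Nat.mod_lt _ hs0⟩ : Fin s) = a j :=
          Fin.ext (by simp [Nat.mod_eq_of_lt hlt])
        rw [hv, Function.update_eq_self]
    rw [hvec, smul_mulVec, Matrix.one_mulVec, Pi.smul_apply, smul_eq_mul]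
  -- the matrices commute
  have hcomm : ∀ j k : Fin n, A j * A k = A k * A j := by
    intro j k
    rcases eq_or_ne j k with rfl | hjk
    · rfl
    apply mat_ext
    intro x
    rw [← Matrix.mulVec_mulVec, ← Matrix.mulVec_mulVec]
    funext a
    rw [step, step, step, step]
    simp only [Function.update_of_ne (Ne.symm hjk), Function.update_of_ne hjk]
    rw [Function.update_comm hjk]
    ring
  -- entries of powers of A j (j ≠ i) don't change the i-th digit
  have hsupp : ∀ (j : Fin n), j ≠ i → ∀ (t' : ℕ) (a b : Fin n → Fin s),
      (A j ^ t') a b ≠ 0 → b i = a i := by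
    intro j hj t'
    induction t' with
    | zero =>
      intro a b h
      rw [pow_zero] at h
      by_cases hab : a = b
      · rw [hab]
      · exact absurd (Matrix.one_apply_ne hab) h
    | succ t' ih =>
      intro a b h
      rw [pow_succ, Matrix.mul_apply] at h
      obtain ⟨c, _, hc⟩ := Finset.exists_ne_zero_of_sum_ne_zero h
      have h1 : (A j ^ t') a c ≠ 0 := fun hz => hc (by rw [hz, zero_mul])
      have h2 : (A j) c b ≠ 0 := fun hz => hc (by rw [hz, mul_zero])
      rw [hA j] at h2
      simp only [Matrix.of_apply] at h2
      have hbc : b = Function.update c j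
          ⟨((c j : ℕ) + 1) % s, Nat.mod_lt _ hs0⟩ := by
        by_contra hne
        rw [if_neg hne] at h2
        exact h2 rfl
      have hbi : b i = c i := by
        rw [hbc]; exact Function.update_of_ne (Ne.symm hj) _ _
      rw [hbi, ih a c h1]
  -- difference of distinct A's is injective on vectors
  have hdiffinj : ∀ j k : Fin n, j ≠ k → ∀ v : (Fin n → Fin s) → F,
      (A j - A k) *ᵥ v = 0 → v = 0 := by
    intro j k hjk v hv
    have hN : (∑ u ∈ Finset.range s, (A j) ^ u * (A k) ^ (s - 1 - u)) * (A j - A k)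
        = (γ ^ ((j:ℕ)+1) - γ ^ ((k:ℕ)+1))
          • (1 : Matrix (Fin n → Fin s) (Fin n → Fin s) F) := by
      rw [Commute.geom_sum₂_mul (hcomm j k) s, hA_cyc j, hA_cyc k, ← sub_smul]
    have h0 : (γ ^ ((j:ℕ)+1) - γ ^ ((k:ℕ)+1)) • v = 0 := by
      have hcalc : ((γ ^ ((j:ℕ)+1) - γ ^ ((k:ℕ)+1)) •
          (1 : Matrix (Fin n → Fin s) (Fin n → Fin s) F)) *ᵥ v = 0 := by
        rw [← hN, ← Matrix.mulVec_mulVec, hv, Matrix.mulVec_zero]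
      rw [smul_mulVec, Matrix.one_mulVec] at hcalc
      exact hcalc
    have hc0 : γ ^ ((j:ℕ)+1) - γ ^ ((k:ℕ)+1) ≠ 0 := sub_ne_zero.mpr (hγpowFin j k hjk)
    exact (smul_eq_zero.mp h0).resolve_left hc0
  -- mulVec distributes over sums
  have hlin : ∀ (Q : Finset (Fin n)) (f : Fin n → (Fin n → Fin s) → F)
      (M : Matrix (Fin n → Fin s) (Fin n → Fin s) F),
      M *ᵥ (∑ k ∈ Q, f k) = ∑ k ∈ Q, M *ᵥ f k := by
    intro Q f M
    simp only [← Matrix.mulVecLin_apply, map_sum]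
  -- operator Vandermonde lemma
  have vdm : ∀ (T : Finset (Fin n)) (x : Fin n → (Fin n → Fin s) → F),
      (∀ t' < T.card, ∑ j ∈ T, (A j) ^ t' *ᵥ x j = 0) → ∀ j ∈ T, x j = 0 := by
    intro T
    induction T using Finset.strongInductionOn with
    | _ T ih =>
      intro x hx j hj
      have hx' : ∀ t' < (T.erase j).card,
          ∑ k ∈ T.erase j, (A k) ^ t' *ᵥ ((A k - A j) *ᵥ x k) = 0 := by
        intro t' ht'
        have hcard : (T.erase j).card = T.card - 1 := Finset.card_erase_of_mem hj
        have e1 := hx (t' + 1) (by omega)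
        have e2 := hx t' (by have := Finset.card_pos.mpr ⟨j, hj⟩; omega)
        have e2' : ∑ k ∈ T, A j *ᵥ ((A k) ^ t' *ᵥ x k) = 0 := by
          rw [← hlin, e2, Matrix.mulVec_zero]
        have key : ∀ k ∈ T.erase j, (A k) ^ t' *ᵥ ((A k - A j) *ᵥ x k)
            = (A k) ^ (t'+1) *ᵥ x k - A j *ᵥ ((A k) ^ t' *ᵥ x k) := by
          intro k hk
          have hck : Commute (A k) (A j) := hcomm k j
          rw [Matrix.mulVec_mulVec, Matrix.mulVec_mulVec]
          rw [← Matrix.sub_mulVec]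
          congr 1
          rw [mul_sub, ← pow_succ, (hck.pow_left t').eq]
        rw [Finset.sum_congr rfl key, Finset.sum_sub_distrib]
        have s1 : ∑ k ∈ T.erase j, (A k) ^ (t'+1) *ᵥ x k
            = ∑ k ∈ T, (A k) ^ (t'+1) *ᵥ x k - (A j) ^ (t'+1) *ᵥ x j := by
          rw [← Finset.add_sum_erase T _ hj]; abel
        have s2 : ∑ k ∈ T.erase j, A j *ᵥ ((A k) ^ t' *ᵥ x k)
            = ∑ k ∈ T, A j *ᵥ ((A k) ^ t' *ᵥ x k) - A j *ᵥ ((A j) ^ t' *ᵥ x j) := by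
          rw [← Finset.add_sum_erase T _ hj]; abel
        rw [s1, s2, e1, e2']
        rw [Matrix.mulVec_mulVec, ← pow_succ']
        abel
      have hz : ∀ k ∈ T.erase j, x k = 0 := by
        intro k hk
        have h5 := ih (T.erase j) (Finset.erase_ssubset hj)
          (fun k => (A k - A j) *ᵥ x k) hx' k hk
        exact hdiffinj k j (Finset.ne_of_mem_erase hk) (x k) h5
      have h0 := hx 0 (Finset.card_pos.mpr ⟨j, hj⟩)
      simp only [pow_zero, Matrix.one_mulVec] at h0
      rw [← Finset.add_sum_erase T _ hj, Finset.sum_eq_zero hz, add_zero] at h0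
      exact h0
  -- difference codeword
  set D : Fin n → (Fin n → Fin s) → F := fun j => C j - C' j with hDdef
  have hD : ∀ t' < r, ∑ j, (A j) ^ t' *ᵥ D j = 0 := by
    intro t' ht'
    have h1 := hC t' ht'
    have h2 := hC' t' ht'
    have h3 : ∑ j, (A j) ^ t' *ᵥ D j
        = ∑ j, ((A j) ^ t' *ᵥ C j - (A j) ^ t' *ᵥ C' j) := by
      apply Finset.sum_congr rfl
      intro j _
      simp only [hDdef]
      rw [Matrix.mulVec_sub]
    rw [h3, Finset.sum_sub_distrib, h1, h2, sub_zero]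
  have hvan : ∀ j ∈ S, ∀ a : Fin n → Fin s, (a i : ℕ) = 0 → D j a = 0 := by
    intro j hj a ha
    simp only [hDdef, Pi.sub_apply]
    rw [hvan0 j hj a ha, sub_self]
  have hiS : i ∉ S := fun h => hiR (hSR h)
  have hST : S ⊆ Finset.univ.erase i := by
    intro j hj
    exact Finset.mem_erase.mpr ⟨fun hji => hiS (hji ▸ hj), Finset.mem_univ j⟩
  set T : Finset (Fin n) := (Finset.univ.erase i) \ S with hTdef
  have hTcard : T.card + s ≤ r := by
    have h1 : T.card = (Finset.univ.erase i).card - S.card := Finset.card_sdiff_of_subset hST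
    have h2 : (Finset.univ.erase i).card = n - 1 := by
      rw [Finset.card_erase_of_mem (Finset.mem_univ i), Finset.card_univ, Fintype.card_fin]
    have h3 : S.card ≤ n - 1 := h2 ▸ Finset.card_le_card hST
    omega
  have hTni : ∀ j ∈ T, j ≠ i := by
    intro j hj
    rw [hTdef] at hj
    exact (Finset.mem_erase.mp (Finset.mem_sdiff.mp hj).1).1
  -- the slice projection
  set Pv : ((Fin n → Fin s) → F) → ((Fin n → Fin s) → F) :=
    fun x a => if (a i : ℕ) = 0 then x a else 0 with hPvdef
  have hPvS : ∀ j ∈ S, ∀ t' : ℕ, Pv ((A j) ^ t' *ᵥ D j) = 0 := by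
    intro j hj t'
    funext a
    simp only [hPvdef, Pi.zero_apply]
    by_cases h : (a i : ℕ) = 0
    · rw [if_pos h]
      simp only [Matrix.mulVec, dotProduct]
      apply Finset.sum_eq_zero
      intro b _
      by_cases hM : (A j ^ t') a b = 0
      · rw [hM, zero_mul]
      · have hbi := hsupp j (fun hji => hiS (hji ▸ hj)) t' a b hM
        rw [hvan j hj b (by rw [hbi]; exact h), mul_zero]
    · rw [if_neg h]
  have hPvComm : ∀ (j : Fin n), j ≠ i → ∀ (t' : ℕ) (y : (Fin n → Fin s) → F),
      Pv ((A j) ^ t' *ᵥ y) = (A j) ^ t' *ᵥ (Pv y) := by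
    intro j hj t' y
    funext a
    simp only [hPvdef, Matrix.mulVec, dotProduct]
    by_cases h : (a i : ℕ) = 0
    · rw [if_pos h]
      apply Finset.sum_congr rfl
      intro b _
      by_cases hM : (A j ^ t') a b = 0
      · rw [hM, zero_mul, zero_mul]
      · rw [if_pos (by rw [hsupp j hj t' a b hM]; exact h)]
    · rw [if_neg h]
      symm
      apply Finset.sum_eq_zero
      intro b _
      by_cases hM : (A j ^ t') a b = 0
      · rw [hM, zero_mul]
      · rw [if_neg (by rw [hsupp j hj t' a b hM]; exact h), mul_zero]
  have hPvsmul : ∀ (c : F) (y : (Fin n → Fin s) → F), Pv (c • y) = c • Pv y := by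
    intro c y
    funext a
    simp only [hPvdef, Pi.smul_apply, smul_eq_mul]
    by_cases h : (a i : ℕ) = 0
    · simp [h]
    · simp [h]
  have hPvsum : ∀ (f : Fin n → (Fin n → Fin s) → F),
      Pv (∑ j, f j) = ∑ j, Pv (f j) := by
    intro f
    funext a
    simp only [hPvdef, Finset.sum_apply]
    by_cases h : (a i : ℕ) = 0
    · simp [h, Finset.sum_apply]
    · simp [h, Finset.sum_apply]
  -- the projected parity equations
  have hEq : ∀ t' < r,
      γ ^ (((i:ℕ)+1) * (t' / s)) • Pv ((A i) ^ (t' % s) *ᵥ D i)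
        + ∑ j ∈ T, (A j) ^ t' *ᵥ Pv (D j) = 0 := by
    intro t' ht'
    have h0 : Pv (∑ j, (A j) ^ t' *ᵥ D j) = 0 := by
      rw [hD t' ht']
      funext a
      simp only [hPvdef, Pi.zero_apply]
      by_cases h : (a i : ℕ) = 0 <;> simp [h]
    rw [hPvsum] at h0
    have hsplit : (∑ j, Pv ((A j) ^ t' *ᵥ D j)) = Pv ((A i) ^ t' *ᵥ D i)
        + (∑ j ∈ T, Pv ((A j) ^ t' *ᵥ D j) + ∑ j ∈ S, Pv ((A j) ^ t' *ᵥ D j)) := by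
      rw [← Finset.add_sum_erase _ _ (Finset.mem_univ i)]
      congr 1
      rw [hTdef, Finset.sum_sdiff hST]
    rw [hsplit] at h0
    rw [Finset.sum_eq_zero (fun j hj => hPvS j hj t'), add_zero] at h0
    rw [Finset.sum_congr rfl (fun j hj => hPvComm j (hTni j hj) t' (D j))] at h0
    have hAi : (A i) ^ t' = γ ^ (((i:ℕ)+1) * (t' / s)) • (A i) ^ (t' % s) := by
      conv_lhs => rw [show t' = s * (t' / s) + t' % s from (Nat.div_add_mod t' s).symm]
      rw [pow_add, pow_mul, hA_cyc i, smul_pow, one_pow, ← pow_mul, smul_mul_assoc, one_mul]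
    rw [hAi, smul_mulVec, hPvsmul] at h0
    exact h0
  -- eliminate the node-i unknowns
  have hElim : ∀ t'' < T.card,
      ∑ j ∈ T, (A j) ^ t'' *ᵥ ((γ ^ ((j:ℕ)+1) - γ ^ ((i:ℕ)+1)) • Pv (D j)) = 0 := by
    intro t'' h''
    have e1 := hEq (t'' + s) (by omega)
    have e2 := hEq t'' (by omega)
    rw [Nat.add_div_right _ hs0, Nat.add_mod_right] at e1
    have e2' := congrArg (fun v => γ ^ ((i:ℕ)+1) • v) e2
    simp only [smul_add, smul_zero, Finset.smul_sum, smul_smul, ← pow_add] at e2'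
    rw [show (i:ℕ) + 1 + ((i:ℕ)+1) * (t'' / s) = ((i:ℕ)+1) * (t'' / s + 1) from by ring] at e2'
    have e5 := congrArg₂ (fun u v : (Fin n → Fin s) → F => u - v) e1 e2'
    simp only [add_sub_add_left_eq_sub, sub_zero] at e5
    have e3 : ∑ j ∈ T, ((A j) ^ (t''+s) *ᵥ Pv (D j)
        - γ ^ ((i:ℕ)+1) • ((A j) ^ t'' *ᵥ Pv (D j))) = 0 := by
      rw [Finset.sum_sub_distrib]
      exact e5
    have e4 : ∀ j ∈ T, (A j) ^ (t''+s) *ᵥ Pv (D j)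
        - γ ^ ((i:ℕ)+1) • ((A j) ^ t'' *ᵥ Pv (D j))
        = (A j) ^ t'' *ᵥ ((γ ^ ((j:ℕ)+1) - γ ^ ((i:ℕ)+1)) • Pv (D j)) := by
      intro j hj
      have hp : (A j) ^ (t''+s) = γ ^ ((j:ℕ)+1) • (A j) ^ t'' := by
        rw [pow_add, hA_cyc j, mul_smul_comm, mul_one]
      rw [hp, smul_mulVec, Matrix.mulVec_smul, sub_smul]
    rw [← Finset.sum_congr rfl e4]
    exact e3
  have hE0 : ∀ j ∈ T, Pv (D j) = 0 := by
    intro j hj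
    have h5 := vdm T (fun j => (γ ^ ((j:ℕ)+1) - γ ^ ((i:ℕ)+1)) • Pv (D j)) hElim j hj
    exact (smul_eq_zero.mp h5).resolve_left (sub_ne_zero.mpr (hγpowFin j i (hTni j hj)))
  have hG0 : ∀ v < s, Pv ((A i) ^ v *ᵥ D i) = 0 := by
    intro v hv
    have h6 := hEq v (by omega)
    rw [Nat.div_eq_of_lt hv, Nat.mod_eq_of_lt hv, Nat.mul_zero, pow_zero, one_smul] at h6
    rw [Finset.sum_eq_zero (fun j hj => by rw [hE0 j hj, Matrix.mulVec_zero]),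
      add_zero] at h6
    exact h6
  -- recover D i = 0
  have hDi : D i = 0 := by
    funext a
    have hv : (a i : ℕ) < s := (a i).isLt
    have h7 := congrFun (hG0 ((a i : ℕ)) hv) (Function.update a i (⟨0, hs0⟩ : Fin s))
    have ha0 : ((Function.update a i (⟨0, hs0⟩ : Fin s)) i : ℕ) = 0 := by
      rw [Function.update_self]
    simp only [hPvdef, Pi.zero_apply] at h7
    rw [if_pos ha0] at h7
    rw [pw0 i ((a i : ℕ)) (D i) _ ha0 (le_of_lt hv)] at h7
    rw [Function.update_idem] at h7
    have hva : (⟨((a i : ℕ)) % s, Nat.mod_lt _ hs0⟩ : Fin s) = a i :=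
      Fin.ext (by simp [Nat.mod_eq_of_lt hv])
    rw [hva, Function.update_eq_self] at h7
    rcases mul_eq_zero.mp h7 with hcf | hDa
    · exfalso
      by_cases h0 : (a i : ℕ) = 0
      · rw [if_pos h0] at hcf; exact one_ne_zero hcf
      · rw [if_neg h0] at hcf; exact pow_ne_zero _ hγ0 hcf
    · exact hDa
  have hfin : C i - C' i = 0 := by
    have h8 := hDi
    simp only [hDdef] at h8
    exact h8
  exact sub_eq_zero.mp hfin
end

section
/- The permutation-type code C with parameter s has the d'-optimal access property for every admissible d' simultaneously: let d' be any integer with k ≤ d' ≤ n − 1 such that s' := d' + 1 − k divides s. Then for every node index i ∈ {1,…,n} and every R ⊆ {1,…,n}∖{i} with |R| = d', any two codewords (C_1,…,C_n) and (C'_1,…,C'_n) in C satisfying c_{j,a} = c'_{j,a} for every j ∈ R and every digit string a with s' dividing a_i, also satisfy C_i = C'_i. In particular, taking s = lcm(d_1+1−k,…,d_m+1−k) yields a code with d_i-optimal access for all i ∈ {1,…,m} simultaneously, where node i is recovered by accessing l/s' coordinates from each of any d' helpers. -/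
namespace PermCodeAux

variable {F : Type*} [Field F] {n s : ℕ}

/-- Shift digit `j` of `a` upward by `t` (mod `s`). -/
def shA (hs : 0 < s) (j : Fin n) (t : ℕ) (a : Fin n → Fin s) : Fin n → Fin s :=
  Function.update a j ⟨((a j : ℕ) + t) % s, Nat.mod_lt _ hs⟩

/-- Weighted shift operator along digit `j` with weight function `w`. -/
def WS (hs : 0 < s) (j : Fin n) (w : ℕ → F) (f : (Fin n → Fin s) → F) :
    (Fin n → Fin s) → F :=
  fun a => w ((a j : ℕ)) * f (shA hs j 1 a)

lemma shA_apply_self (hs : 0 < s) (j : Fin n) (t : ℕ) (a : Fin n → Fin s) :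
    shA hs j t a j = ⟨((a j : ℕ) + t) % s, Nat.mod_lt _ hs⟩ := by
  simp [shA]

lemma shA_apply_ne (hs : 0 < s) {j j' : Fin n} (h : j' ≠ j) (t : ℕ) (a : Fin n → Fin s) :
    shA hs j t a j' = a j' := by
  simp [shA, Function.update_of_ne h]

lemma shA_zero (hs : 0 < s) (j : Fin n) (a : Fin n → Fin s) :
    shA hs j 0 a = a := by
  have : (⟨((a j : ℕ) + 0) % s, Nat.mod_lt _ hs⟩ : Fin s) = a j := by
    ext
    simp [Nat.mod_eq_of_lt (a j).isLt]
  rw [shA, this, Function.update_eq_self]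

lemma shA_shA (hs : 0 < s) (j : Fin n) (t t' : ℕ) (a : Fin n → Fin s) :
    shA hs j t' (shA hs j t a) = shA hs j (t + t') a := by
  unfold shA
  rw [Function.update_idem]
  congr 1
  ext
  simp [Function.update_self, Nat.mod_add_mod, Nat.add_assoc]

lemma shA_comm (hs : 0 < s) {j j' : Fin n} (h : j ≠ j') (t t' : ℕ) (a : Fin n → Fin s) :
    shA hs j' t' (shA hs j t a) = shA hs j t (shA hs j' t' a) := by
  unfold shA
  rw [Function.update_comm h.symm]
  congr 2 <;> simp [Function.update_of_ne h, Function.update_of_ne h.symm]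

lemma shA_full (hs : 0 < s) (j : Fin n) (a : Fin n → Fin s) :
    shA hs j s a = a := by
  have : (⟨((a j : ℕ) + s) % s, Nat.mod_lt _ hs⟩ : Fin s) = a j := by
    ext
    simp [Nat.add_mod_right, Nat.mod_eq_of_lt (a j).isLt]
  rw [shA, this, Function.update_eq_self]

lemma WS_iter_apply (hs : 0 < s) (j : Fin n) (w : ℕ → F) (t : ℕ)
    (f : (Fin n → Fin s) → F) (a : Fin n → Fin s) :
    (WS hs j w)^[t] f a
      = (∏ u ∈ Finset.range t, w (((a j : ℕ) + u) % s)) * f (shA hs j t a) := by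
  induction t generalizing f a with
  | zero => simp [shA_zero]
  | succ t ih =>
      rw [Function.iterate_succ_apply, ih]
      rw [WS]
      rw [shA_apply_self, shA_shA]
      rw [Finset.prod_range_succ]
      ring

lemma WS_iter_sub (hs : 0 < s) (j : Fin n) (w : ℕ → F) (t : ℕ)
    (f g : (Fin n → Fin s) → F) (a : Fin n → Fin s) :
    (WS hs j w)^[t] (fun x => f x - g x) a
      = (WS hs j w)^[t] f a - (WS hs j w)^[t] g a := by
  simp only [WS_iter_apply, mul_sub]

lemma WS_comm_iter (hs : 0 < s) {j j' : Fin n} (h : j ≠ j') (w w' : ℕ → F) (t : ℕ)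
    (f : (Fin n → Fin s) → F) (a : Fin n → Fin s) :
    (WS hs j w)^[t] (WS hs j' w' f) a = WS hs j' w' ((WS hs j w)^[t] f) a := by
  rw [WS_iter_apply, WS, WS, WS_iter_apply]
  rw [shA_apply_ne hs (Ne.symm h), shA_apply_ne hs h, shA_comm hs h]
  ring

/-- In a full cycle of length `s`, the shifted digit passes through each
residue exactly once; here the product of an `ite` weight over a cycle. -/
lemma prod_cycle (hs : 0 < s) (c : F) (v w₀ : ℕ) (hv : v < s) (hw : w₀ < s) :
    (∏ u ∈ Finset.range s, (if (v + u) % s = w₀ then c else 1)) = c := by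
  have key : ∀ u, u < s → (v + u) % s = if v + u < s then v + u else v + u - s := by
    intro u hu
    split_ifs with h
    · exact Nat.mod_eq_of_lt h
    · rw [Nat.mod_eq_sub_mod (by omega)]
      exact Nat.mod_eq_of_lt (by omega)
  set u₀ := if v ≤ w₀ then w₀ - v else s + w₀ - v with hu₀
  have hu₀lt : u₀ < s := by rw [hu₀]; split_ifs <;> omega
  rw [Finset.prod_eq_single_of_mem u₀ (Finset.mem_range.mpr hu₀lt)]
  · rw [if_pos]
    rw [key u₀ hu₀lt]
    split_ifs <;> (rw [hu₀] at *) <;> split_ifs at * <;> omega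
  · intro u hu hne
    rw [if_neg]
    rw [key u (Finset.mem_range.mp hu)]
    split_ifs with h
    · rw [hu₀] at hne; split_ifs at hne <;> omega
    · rw [hu₀] at hne
      have := Finset.mem_range.mp hu
      split_ifs at hne <;> omega

/-- Weight of the original node operator: `γ^(jj+1)` at digit `0`. -/
def lamNF (γ : F) (jj : ℕ) (v : ℕ) : F := if v = 0 then γ ^ (jj + 1) else 1

/-- Weight of the auxiliary operator `X`: `γ^(ii+1)` at digit `s'-1`. -/
def muNF (γ : F) (ii s' : ℕ) (v : ℕ) : F := if v = s' - 1 then γ ^ (ii + 1) else 1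

/-- Diagonal twist. -/
def thNF (γ : F) (ii s' : ℕ) (v : ℕ) : F :=
  if 1 ≤ v ∧ v < s' then γ ^ (ii + 1) else 1

lemma stepNF (γ : F) (ii s' s : ℕ) (h1 : 1 ≤ s') (h2 : s' ≤ s) (w : ℕ) (hw : w < s) :
    lamNF γ ii w * thNF γ ii s' w = muNF γ ii s' w * thNF γ ii s' ((w + 1) % s) := by
  have hmod : (w + 1) % s = if w + 1 = s then 0 else w + 1 := by
    split_ifs with h
    · rw [h, Nat.mod_self]
    · exact Nat.mod_eq_of_lt (by omega)
  rw [hmod]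
  unfold lamNF muNF thNF
  split_ifs <;> first | ring1 | (exfalso; omega)

lemma numNF (γ : F) (ii s' s : ℕ) (hs : 0 < s) (h1 : 1 ≤ s') (h2 : s' ≤ s)
    (v : ℕ) (hv : v < s) (hdvd : s' ∣ v) (t : ℕ) :
    (∏ u ∈ Finset.range t, lamNF γ ii ((v + u) % s))
      = (∏ u ∈ Finset.range t, muNF γ ii s' ((v + u) % s))
        * thNF γ ii s' ((v + t) % s) := by
  induction t with
  | zero =>
      have hv0 : thNF γ ii s' ((v + 0) % s) = 1 := by
        rw [Nat.add_zero, Nat.mod_eq_of_lt hv]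
        unfold thNF
        rw [if_neg]
        rcases Nat.eq_zero_or_pos v with h | h
        · omega
        · have := Nat.le_of_dvd h hdvd
          omega
      rw [hv0]; simp
  | succ t ih =>
      rw [Finset.prod_range_succ, Finset.prod_range_succ, ih]
      have hw : (v + t) % s < s := Nat.mod_lt _ hs
      have hstep := stepNF γ ii s' s h1 h2 ((v + t) % s) hw
      have hmod : ((v + t) % s + 1) % s = (v + (t + 1)) % s := by
        rw [Nat.mod_add_mod, ← Nat.add_assoc]
      rw [← hmod]
      linear_combination (∏ u ∈ Finset.range t, muNF γ ii s' ((v + u) % s)) * hstep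

end PermCodeAux

open PermCodeAux in
open Matrix in
/-- The permutation-type code with parameter `s` has the `d'`-optimal access
property for every `d'` with `k ≤ d' ≤ n-1` and `s' = d' + 1 - k` dividing `s`:
node `i` is determined by the coordinates `{c_{j,a} : s' ∣ a_i}` accessed in any
`d'` helpers. -/
theorem permutation_code_simultaneous_d_optimal_access
    (F : Type*) [Field F] [Fintype F]
    (n r s : ℕ) (hr : 1 ≤ r) (hrn : r < n) (hspos : 0 < s)
    (hF : n + 1 ≤ Fintype.card F)
    (γ : F) (hγprim : ∀ x : F, x ≠ 0 → ∃ m : ℕ, x = γ ^ m)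
    (lam : Fin n → Fin s → F)
    (hlam : ∀ (i : Fin n) (u : Fin s),
      lam i u = if (u : ℕ) = 0 then γ ^ ((i : ℕ) + 1) else 1)
    (A : Fin n → Matrix (Fin n → Fin s) (Fin n → Fin s) F)
    (hA : ∀ i : Fin n,
      A i = Matrix.of fun a b : Fin n → Fin s =>
        if b = Function.update a i
            ⟨((a i : ℕ) + 1) % s, Nat.mod_lt _ hspos⟩
        then lam i (a i) else 0)
    (C C' : Fin n → (Fin n → Fin s) → F)
    (hC : ∀ t < r, ∑ i, (A i ^ t) *ᵥ C i = 0)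
    (hC' : ∀ t < r, ∑ i, (A i ^ t) *ᵥ C' i = 0)
    (d' s' : ℕ) (hd1 : n - r ≤ d') (hd2 : d' ≤ n - 1)
    (hs' : s' = d' + 1 - (n - r)) (hdvd : s' ∣ s)
    (i : Fin n) (R : Finset (Fin n)) (hiR : i ∉ R) (hR : R.card = d')
    (hrep : ∀ j ∈ R, ∀ a : Fin n → Fin s, s' ∣ (a i : ℕ) → C j a = C' j a) :
    C i = C' i := by
  classical
  have hs'pos : 1 ≤ s' := by omega
  have hs'le : s' ≤ s := Nat.le_of_dvd hspos hdvd
  have hn2 : 2 ≤ n := by omega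
  -- `γ` is nonzero
  have hγ0 : γ ≠ 0 := by
    intro h0
    have hall : ∀ x : F, x ≠ 0 → x = 1 := by
      intro x hx
      obtain ⟨m, rfl⟩ := hγprim x hx
      rcases Nat.eq_zero_or_pos m with hm | hm
      · rw [hm, pow_zero]
      · exact absurd (by rw [h0, zero_pow (by omega)]) hx
    have hsub : (Finset.univ : Finset F) ⊆ {0, 1} := by
      intro x _
      rcases eq_or_ne x 0 with h | h
      · simp [h]
      · simp [hall x h]
    have h1 := Finset.card_le_card hsub
    have h2 : ({0, 1} : Finset F).card ≤ 2 := by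
      have := Finset.card_insert_le (0 : F) ({1} : Finset F)
      simpa using this
    rw [Finset.card_univ] at h1
    omega
  -- small powers of `γ` are not `1`
  have hpow_ne : ∀ e : ℕ, 0 < e → e < n → γ ^ e ≠ 1 := by
    intro e he hen h1
    have hsub : (Finset.univ : Finset F).erase 0 ⊆
        (Finset.range e).image (fun m => γ ^ m) := by
      intro x hx
      obtain ⟨m, rfl⟩ := hγprim x (Finset.ne_of_mem_erase hx)
      refine Finset.mem_image.mpr ⟨m % e, Finset.mem_range.mpr (Nat.mod_lt _ he), ?_⟩
      conv_rhs => rw [← Nat.div_add_mod m e]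
      rw [pow_add, pow_mul, h1, one_pow, one_mul]
    have h2 := Finset.card_le_card hsub
    have h3 := Finset.card_image_le (s := Finset.range e) (f := fun m => γ ^ m)
    rw [Finset.card_erase_of_mem (Finset.mem_univ _), Finset.card_univ] at h2
    rw [Finset.card_range] at h3
    omega
  -- powers `γ^(p+1)` for `p < n` are pairwise distinct
  have hγinj : ∀ p q : Fin n, γ ^ ((p : ℕ) + 1) = γ ^ ((q : ℕ) + 1) → p = q := by
    have key : ∀ p q : ℕ, p < q → q < n → γ ^ (p + 1) ≠ γ ^ (q + 1) := by
      intro p q hpq hq h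
      have h2 : γ ^ (q + 1) = γ ^ (p + 1) * γ ^ (q - p) := by
        rw [← pow_add]; congr 1; omega
      rw [h2] at h
      have h3 : γ ^ (p + 1) ≠ 0 := pow_ne_zero _ hγ0
      have h4 : γ ^ (q - p) = 1 := by
        nth_rewrite 1 [← mul_one (γ ^ (p + 1))] at h
        exact (mul_left_cancel₀ h3 h).symm
      exact hpow_ne (q - p) (by omega) (by omega) h4
    intro p q hpq
    rcases lt_trichotomy (p : ℕ) (q : ℕ) with h | h | h
    · exact absurd hpq (key _ _ h q.isLt)
    · exact Fin.ext h
    · exact absurd hpq.symm (key _ _ h p.isLt)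
  -- single-step action of `A j`
  have hstep1 : ∀ (j : Fin n) (v : (Fin n → Fin s) → F),
      A j *ᵥ v = WS hspos j (lamNF γ (j : ℕ)) v := by
    intro j v
    funext a
    rw [hA j]
    show (∑ b, (Matrix.of fun a b : Fin n → Fin s =>
        if b = Function.update a j ⟨((a j : ℕ) + 1) % s, Nat.mod_lt _ hspos⟩
        then lam j (a j) else 0) a b * v b) = _
    simp only [Matrix.of_apply]
    have hsplit : ∀ b : Fin n → Fin s,
        (if b = Function.update a j ⟨((a j : ℕ) + 1) % s, Nat.mod_lt _ hspos⟩
          then lam j (a j) else 0) * v b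
        = if b = Function.update a j ⟨((a j : ℕ) + 1) % s, Nat.mod_lt _ hspos⟩
          then lam j (a j) * v b else 0 := by
      intro b; split <;> simp
    simp only [hsplit]
    rw [Finset.sum_ite_eq' Finset.univ
      (Function.update a j ⟨((a j : ℕ) + 1) % s, Nat.mod_lt _ hspos⟩)
      (fun b => lam j (a j) * v b)]
    rw [if_pos (Finset.mem_univ _), hlam]
    rfl
  -- iterated action of `A j`
  have hAct : ∀ (j : Fin n) (t : ℕ) (v : (Fin n → Fin s) → F),
      (A j ^ t) *ᵥ v = (WS hspos j (lamNF γ (j : ℕ)))^[t] v := by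
    intro j t
    induction t with
    | zero => intro v; simp
    | succ t ih =>
        intro v
        rw [pow_succ, ← Matrix.mulVec_mulVec, hstep1, ih, Function.iterate_succ_apply]
  -- parity equations for the difference
  have hEq0 : ∀ t, t < r → ∀ a : Fin n → Fin s,
      (∑ j : Fin n, (WS hspos j (lamNF γ (j : ℕ)))^[t] (fun x => C j x - C' j x) a) = 0 := by
    intro t ht a
    have h1 := congrFun (hC t ht) a
    have h2 := congrFun (hC' t ht) a
    simp only [Finset.sum_apply, Pi.zero_apply] at h1 h2
    have h3 : ∀ j : Fin n, (WS hspos j (lamNF γ (j : ℕ)))^[t] (fun x => C j x - C' j x) a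
        = ((A j ^ t) *ᵥ C j) a - ((A j ^ t) *ᵥ C' j) a := by
      intro j
      rw [hAct, hAct, WS_iter_sub]
    rw [Finset.sum_congr rfl (fun j _ => h3 j), Finset.sum_sub_distrib, h1, h2, sub_zero]
  -- helper terms vanish on accessed coordinates
  have hRzero : ∀ (t : ℕ), ∀ j ∈ R, ∀ a : Fin n → Fin s, s' ∣ (a i : ℕ) →
      (WS hspos j (lamNF γ (j : ℕ)))^[t] (fun x => C j x - C' j x) a = 0 := by
    intro t j hj a ha
    have hij : i ≠ j := fun h => hiR (h ▸ hj)
    rw [WS_iter_apply]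
    have hzero : C j (shA hspos j t a) - C' j (shA hspos j t a) = 0 := by
      rw [hrep j hj (shA hspos j t a) (by rw [shA_apply_ne hspos hij]; exact ha), sub_self]
    rw [hzero, mul_zero]
  -- the twisted unknown
  have hClaim1 : ∀ (t : ℕ) (a : Fin n → Fin s), s' ∣ (a i : ℕ) →
      (WS hspos i (lamNF γ (i : ℕ)))^[t] (fun x => C i x - C' i x) a
        = (WS hspos i (muNF γ (i : ℕ) s'))^[t]
            (fun b => thNF γ (i : ℕ) s' ((b i : ℕ)) * (C i b - C' i b)) a := by
    intro t a ha
    rw [WS_iter_apply, WS_iter_apply]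
    simp only [shA_apply_self]
    rw [← mul_assoc,
      ← numNF γ (i : ℕ) s' s hspos hs'pos hs'le ((a i : ℕ)) (a i).isLt ha t]
  -- the helper set
  have hiIns : i ∈ insert i R := Finset.mem_insert_self i R
  have hiH : i ∉ Finset.univ \ insert i R := by simp [hiIns]
  have hHcard : s' + (Finset.univ \ insert i R).card = r := by
    have h1 : (insert i R).card = d' + 1 := by
      rw [Finset.card_insert_of_notMem hiR, hR]
    have h2 : (Finset.univ \ insert i R).card = n - (d' + 1) := by
      rw [Finset.card_sdiff_of_subset (Finset.subset_univ _), h1, Finset.card_univ, Fintype.card_fin]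
    have h3 : d' + 1 ≤ n := by omega
    omega
  -- the reduced system
  have hHyp : ∀ t, t < r → ∀ a : Fin n → Fin s, s' ∣ (a i : ℕ) →
      (WS hspos i (muNF γ (i : ℕ) s'))^[t]
          (fun b => thNF γ (i : ℕ) s' ((b i : ℕ)) * (C i b - C' i b)) a
        + ∑ j ∈ Finset.univ \ insert i R,
            (WS hspos j (lamNF γ (j : ℕ)))^[t] (fun x => C j x - C' j x) a = 0 := by
    intro t ht a ha
    have hsplit : (∑ j ∈ Finset.univ \ insert i R,
          (WS hspos j (lamNF γ (j : ℕ)))^[t] (fun x => C j x - C' j x) a)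
        + ∑ j ∈ insert i R, (WS hspos j (lamNF γ (j : ℕ)))^[t] (fun x => C j x - C' j x) a
        = ∑ j : Fin n, (WS hspos j (lamNF γ (j : ℕ)))^[t] (fun x => C j x - C' j x) a :=
      Finset.sum_sdiff (Finset.subset_univ (insert i R))
    rw [hEq0 t ht a] at hsplit
    rw [Finset.sum_insert hiR] at hsplit
    have hRsum : (∑ j ∈ R, (WS hspos j (lamNF γ (j : ℕ)))^[t] (fun x => C j x - C' j x) a)
        = 0 := Finset.sum_eq_zero (fun j hj => hRzero t j hj a ha)
    rw [hRsum, add_zero] at hsplit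
    rw [← hClaim1 t a ha]
    linear_combination hsplit
  -- the elimination
  have hELIM : ∀ G : Finset (Fin n), i ∉ G →
      ∀ (Zc : (Fin n → Fin s) → F) (Dc : Fin n → (Fin n → Fin s) → F),
        (∀ t, t < s' + G.card → ∀ a : Fin n → Fin s, s' ∣ (a i : ℕ) →
          (WS hspos i (muNF γ (i : ℕ) s'))^[t] Zc a
            + ∑ j ∈ G, (WS hspos j (lamNF γ (j : ℕ)))^[t] (Dc j) a = 0) →
        Zc = 0 := by
    intro G
    induction G using Finset.induction_on with
    | empty =>
        intro _ Zc Dc hyp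
        funext b
        have hbi := (b i).isLt
        have hval : s' * ((b i : ℕ) / s') < s := by
          calc s' * ((b i : ℕ) / s') = (b i : ℕ) / s' * s' := mul_comm _ _
            _ ≤ (b i : ℕ) := Nat.div_mul_le_self _ _
            _ < s := hbi
        set a := Function.update b i (⟨s' * ((b i : ℕ) / s'), hval⟩ : Fin s) with hadef
        have hai : (a i : ℕ) = s' * ((b i : ℕ) / s') := by rw [hadef]; simp
        have hdvd' : s' ∣ (a i : ℕ) := by rw [hai]; exact Dvd.intro _ rfl
        have ht : (b i : ℕ) % s' < s' := Nat.mod_lt _ hs'pos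
        have h0 := hyp ((b i : ℕ) % s')
          (by simp only [Finset.card_empty, Nat.add_zero]; exact ht) a hdvd'
        rw [Finset.sum_empty, add_zero, WS_iter_apply] at h0
        have hsh : shA hspos i ((b i : ℕ) % s') a = b := by
          funext p
          by_cases hp : p = i
          · subst hp
            rw [shA_apply_self]
            apply Fin.ext
            show ((a p : ℕ) + (b p : ℕ) % s') % s = (b p : ℕ)
            rw [hai]
            rw [Nat.div_add_mod (b p : ℕ) s']
            exact Nat.mod_eq_of_lt hbi
          · rw [shA_apply_ne hspos hp]
            rw [hadef]
            exact Function.update_of_ne hp _ b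
        rw [hsh] at h0
        have hne : (∏ u ∈ Finset.range ((b i : ℕ) % s'),
            muNF γ (i : ℕ) s' (((a i : ℕ) + u) % s)) ≠ 0 := by
          apply Finset.prod_ne_zero_iff.mpr
          intro u _
          unfold muNF
          split_ifs
          · exact pow_ne_zero _ hγ0
          · exact one_ne_zero
        have := (mul_eq_zero.mp h0).resolve_left hne
        simpa using this
    | @insert j₀ G hj₀G ih =>
        intro hiG Zc Dc hyp
        have hij₀ : i ≠ j₀ := fun h => hiG (h ▸ Finset.mem_insert_self j₀ G)
        have hiG' : i ∉ G := fun h => hiG (Finset.mem_insert_of_mem h)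
        have hGcard : (insert j₀ G).card = G.card + 1 := Finset.card_insert_of_notMem hj₀G
        have hZc'0 : (fun x => WS hspos i (muNF γ (i : ℕ) s') Zc x
            - WS hspos j₀ (lamNF γ (j₀ : ℕ)) Zc x) = 0 := by
          apply ih hiG' _ (fun j x => WS hspos j (lamNF γ (j : ℕ)) (Dc j) x
            - WS hspos j₀ (lamNF γ (j₀ : ℕ)) (Dc j) x)
          intro t ht a ha
          have hsh₀i : ((shA hspos j₀ 1 a) i : ℕ) = (a i : ℕ) := by
            rw [shA_apply_ne hspos hij₀]
          have h4 := hyp (t + 1) (by omega) a ha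
          have h5 := hyp t (by omega) (shA hspos j₀ 1 a) (by rw [hsh₀i]; exact ha)
          rw [Finset.sum_insert hj₀G] at h4 h5
          have e3 : (WS hspos j₀ (lamNF γ (j₀ : ℕ)))^[t + 1] (Dc j₀) a
              = lamNF γ (j₀ : ℕ) ((a j₀ : ℕ))
                * (WS hspos j₀ (lamNF γ (j₀ : ℕ)))^[t] (Dc j₀) (shA hspos j₀ 1 a) := by
            rw [Function.iterate_succ_apply']
            rfl
          have e1 : (WS hspos i (muNF γ (i : ℕ) s'))^[t]
              (fun x => WS hspos i (muNF γ (i : ℕ) s') Zc x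
                - WS hspos j₀ (lamNF γ (j₀ : ℕ)) Zc x) a
              = (WS hspos i (muNF γ (i : ℕ) s'))^[t + 1] Zc a
                - lamNF γ (j₀ : ℕ) ((a j₀ : ℕ))
                  * (WS hspos i (muNF γ (i : ℕ) s'))^[t] Zc (shA hspos j₀ 1 a) := by
            rw [WS_iter_sub, WS_comm_iter hspos hij₀, ← Function.iterate_succ_apply]
            rfl
          have e2 : ∀ j ∈ G, (WS hspos j (lamNF γ (j : ℕ)))^[t]
              (fun x => WS hspos j (lamNF γ (j : ℕ)) (Dc j) x
                - WS hspos j₀ (lamNF γ (j₀ : ℕ)) (Dc j) x) a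
              = (WS hspos j (lamNF γ (j : ℕ)))^[t + 1] (Dc j) a
                - lamNF γ (j₀ : ℕ) ((a j₀ : ℕ))
                  * (WS hspos j (lamNF γ (j : ℕ)))^[t] (Dc j) (shA hspos j₀ 1 a) := by
            intro j hj
            have hjj₀ : j ≠ j₀ := fun h => hj₀G (h ▸ hj)
            rw [WS_iter_sub, WS_comm_iter hspos hjj₀, ← Function.iterate_succ_apply]
            rfl
          rw [e1, Finset.sum_congr rfl e2, Finset.sum_sub_distrib, ← Finset.mul_sum]
          linear_combination h4 - lamNF γ (j₀ : ℕ) ((a j₀ : ℕ)) * h5 - e3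
        have hXP : ∀ a, WS hspos i (muNF γ (i : ℕ) s') Zc a
            = WS hspos j₀ (lamNF γ (j₀ : ℕ)) Zc a :=
          fun a => sub_eq_zero.mp (congrFun hZc'0 a)
        have hfun : WS hspos i (muNF γ (i : ℕ) s') Zc
            = WS hspos j₀ (lamNF γ (j₀ : ℕ)) Zc := funext hXP
        have hiter : ∀ (q : ℕ) (a : Fin n → Fin s),
            (WS hspos i (muNF γ (i : ℕ) s'))^[q] Zc a
              = (WS hspos j₀ (lamNF γ (j₀ : ℕ)))^[q] Zc a := by
          intro q
          induction q with
          | zero => intro a; rfl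
          | succ q ihq =>
              intro a
              rw [Function.iterate_succ_apply, hfun, WS_comm_iter hspos hij₀]
              show lamNF γ (j₀ : ℕ) ((a j₀ : ℕ))
                * (WS hspos i (muNF γ (i : ℕ) s'))^[q] Zc (shA hspos j₀ 1 a) = _
              rw [ihq, Function.iterate_succ_apply']
              rfl
        funext b
        have h6 := hiter s b
        rw [WS_iter_apply, WS_iter_apply, shA_full, shA_full] at h6
        simp only [muNF, lamNF] at h6
        rw [prod_cycle hspos _ _ _ (b i).isLt (by omega : s' - 1 < s),
          prod_cycle hspos _ _ _ (b j₀).isLt (by omega : 0 < s)] at h6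
        have h7 : γ ^ ((i : ℕ) + 1) - γ ^ ((j₀ : ℕ) + 1) ≠ 0 :=
          sub_ne_zero.mpr (fun h => hij₀ (hγinj i j₀ h))
        have h8 : (γ ^ ((i : ℕ) + 1) - γ ^ ((j₀ : ℕ) + 1)) * Zc b = 0 := by
          linear_combination h6
        simpa using (mul_eq_zero.mp h8).resolve_left h7
  -- apply the elimination
  have hZ0 : (fun b => thNF γ (i : ℕ) s' ((b i : ℕ)) * (C i b - C' i b)) = 0 := by
    apply hELIM (Finset.univ \ insert i R) hiH _ (fun j x => C j x - C' j x)
    intro t ht a ha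
    exact hHyp t (by omega) a ha
  funext a
  have h8 := congrFun hZ0 a
  simp only [Pi.zero_apply] at h8
  have hθ : thNF γ (i : ℕ) s' ((a i : ℕ)) ≠ 0 := by
    unfold thNF
    split_ifs
    · exact pow_ne_zero _ hγ0
    · exact one_ne_zero
  have h9 := (mul_eq_zero.mp h8).resolve_left hθ
  exact sub_eq_zero.mp h9
end

section
/- Let A_1,…,A_n be l×l matrices over a field F such that A_iA_j = A_jA_i for all i, j and A_i − A_j is invertible for all i ≠ j. Set B_i = (∏_{j≠i}(A_j − A_i))^{−1} for i = 1,…,n (the product taken in any order; all factors commute and are invertible). Then for every integer t with 0 ≤ t ≤ n − 2, one has ∑_{i=1}^n A_i^t B_i = 0. -/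
/-!
Let `L_i = b_i ∏_{j ≠ i} (a_j - X)` with `b_i (∏_{j ≠ i} (a_j - a_i)) = 1`, in a commutative ring.
Then `L_i (a_k) = δ_{ik}`, so `V M = 1` for the Vandermonde matrix `V = (a_k ^ m)` and the
coefficient matrix `M = (coeff_m L_i)`. Hence also `M V = 1`, and the row of leading
coefficients of `M` is `((-1)^(n-1) b_i)_i`, which turns that row of `M V = 1` into the identity
`∑_i a_i ^ t b_i = 0` for `t < n - 1`. The matrices `A_i` and `B_i` all commute (each `B_i` is the
inverse of a product of the commuting `A_j - A_i`), so they lie in a commutative subring.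
-/

open Finset Polynomial

section CommRing

variable {R : Type*} [CommRing R] {n : ℕ} (a b : Fin (n + 1) → R)

lemma natDegree_C_sub_X_le (r : R) : (C r - X).natDegree ≤ 1 := by
  compute_degree

/-- With `b i` the inverse of `∏ j ≠ i, (a j - a i)`, this is the Lagrange basis polynomial
of the node `a i`. -/
noncomputable def lagrangeBasis (i : Fin (n + 1)) : R[X] :=
  C (b i) * ∏ j ∈ univ.erase i, (C (a j) - X)

lemma natDegree_lagrangeBasis_le (i : Fin (n + 1)) : (lagrangeBasis a b i).natDegree ≤ n := by
  refine (natDegree_C_mul_le _ _).trans ((natDegree_prod_le _ _).trans ?_)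
  simpa using sum_le_card_nsmul (univ.erase i) _ 1 fun j _ => natDegree_C_sub_X_le (a j)

lemma coeff_lagrangeBasis (i : Fin (n + 1)) :
    (lagrangeBasis a b i).coeff n = (-1) ^ n * b i := by
  have h := coeff_prod_of_natDegree_le (univ.erase i) (fun j => C (a j) - X) 1
    fun j _ => natDegree_C_sub_X_le (a j)
  simp only [mem_univ, card_erase_of_mem, card_univ, Fintype.card_fin, add_tsub_cancel_right,
    mul_one, coeff_sub, coeff_C_succ, coeff_X_one, zero_sub, prod_const] at h
  rw [lagrangeBasis, coeff_C_mul, h, mul_comm]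

variable {a b}

lemma eval_lagrangeBasis (hb : ∀ i, b i * ∏ j ∈ univ.erase i, (a j - a i) = 1)
    (i k : Fin (n + 1)) : (lagrangeBasis a b i).eval (a k) = if k = i then 1 else 0 := by
  simp only [lagrangeBasis, eval_mul, eval_C, eval_prod, eval_sub, eval_X]
  split_ifs with hki
  · exact hki ▸ hb k
  · rw [prod_eq_zero (mem_erase.2 ⟨hki, mem_univ k⟩) (sub_self _), mul_zero]

lemma vandermonde_mul_coeff_lagrangeBasis
    (hb : ∀ i, b i * ∏ j ∈ univ.erase i, (a j - a i) = 1) :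
    Matrix.vandermonde a * Matrix.of (fun k i : Fin (n + 1) => (lagrangeBasis a b i).coeff k) =
      1 := by
  ext k i
  rw [Matrix.mul_apply, Matrix.one_apply, ← eval_lagrangeBasis hb,
    eval_eq_sum_range' (Nat.lt_succ_of_le (natDegree_lagrangeBasis_le a b i)),
    ← Fin.sum_univ_eq_sum_range]
  simp only [Matrix.vandermonde_apply, Matrix.of_apply, mul_comm]

theorem sum_pow_mul_eq_ite_of_mul_prod_sub_eq_one
    (hb : ∀ i, b i * ∏ j ∈ univ.erase i, (a j - a i) = 1) (t : Fin (n + 1)) :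
    ∑ i, a i ^ (t : ℕ) * b i = if t = Fin.last n then (-1) ^ n else 0 := by
  have hMV := mul_eq_one_comm.1 (vandermonde_mul_coeff_lagrangeBasis hb)
  have h := congrFun (congrFun hMV (Fin.last n)) t
  simp only [Matrix.mul_apply, Matrix.of_apply, Matrix.vandermonde_apply, Fin.val_last,
    coeff_lagrangeBasis, Matrix.one_apply, eq_comm (a := Fin.last n)] at h
  have hsign : ∑ i, a i ^ (t : ℕ) * b i = (-1) ^ n * ∑ i, (-1) ^ n * b i * a i ^ (t : ℕ) := by
    rw [mul_sum]
    refine sum_congr rfl fun i _ => ?_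
    rw [← mul_assoc, ← mul_assoc, ← pow_add, ← two_mul, pow_mul, neg_one_sq, one_pow, one_mul,
      mul_comm]
  rw [hsign, h]
  split_ifs <;> simp

end CommRing

theorem Commute.of_mul_eq_one_right {M : Type*} [Monoid M] [IsDedekindFiniteMonoid M]
    {x u b : M} (hx : Commute x u) (h : b * u = 1) : Commute x b :=
  Commute.units_inv_right (u := .mkOfMulEqOne u b (mul_eq_one_comm.1 h)) hx

open scoped IsMulCommutative in
theorem sum_pow_mul_eq_ite_of_mul_noncommProd_sub_eq_one {A : Type*} [Ring A]
    [IsDedekindFiniteMonoid A] {n : ℕ} (a b : Fin (n + 1) → A)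
    (ha : ∀ i j, Commute (a i) (a j))
    (hb : ∀ i, b i * (univ.erase i).noncommProd (fun j => a j - a i)
      (fun j _ k _ _ => ((ha j k).sub_left (ha i k)).sub_right ((ha j i).sub_left (ha i i))) = 1)
    (t : Fin (n + 1)) :
    ∑ i, a i ^ (t : ℕ) * b i = if t = Fin.last n then (-1) ^ n else 0 := by
  set u := fun i => (univ.erase i).noncommProd (fun j => a j - a i)
    (fun j _ k _ _ => ((ha j k).sub_left (ha i k)).sub_right ((ha j i).sub_left (ha i i)))
  have hau : ∀ k i, Commute (a k) (u i) := fun k i =>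
    noncommProd_commute _ _ _ _ fun j _ => (ha k j).sub_right (ha k i)
  have huu : ∀ i j, Commute (u i) (u j) := fun i j =>
    noncommProd_commute _ _ _ _ fun k _ => (hau k i).symm.sub_right (hau j i).symm
  have hab : ∀ k i, Commute (a k) (b i) := fun k i => (hau k i).of_mul_eq_one_right (hb i)
  have hbb : ∀ i j, Commute (b i) (b j) := fun i j =>
    ((huu j i).of_mul_eq_one_right (hb i)).symm.of_mul_eq_one_right (hb j)
  set S := Algebra.adjoin ℤ (Set.range a ∪ Set.range b)
  have : IsMulCommutative S := Algebra.isMulCommutative_adjoin ℤ <| by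
    rintro _ (⟨i, rfl⟩ | ⟨i, rfl⟩) _ (⟨j, rfl⟩ | ⟨j, rfl⟩)
    exacts [ha i j, hab i j, (hab j i).symm, hbb i j]
  let a' : Fin (n + 1) → S := fun i => ⟨a i, Algebra.subset_adjoin (.inl ⟨i, rfl⟩)⟩
  let b' : Fin (n + 1) → S := fun i => ⟨b i, Algebra.subset_adjoin (.inr ⟨i, rfl⟩)⟩
  have hb' : ∀ i, b' i * ∏ j ∈ univ.erase i, (a' j - a' i) = 1 := fun i => by
    apply Subtype.val_injective
    rw [← noncommProd_eq_prod, MulMemClass.coe_mul, OneMemClass.coe_one]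
    exact (congrArg (b i * ·) (map_noncommProd _ _ _ S.val)).trans (hb i)
  simpa [a', b', apply_ite S.val] using
    congrArg S.val (sum_pow_mul_eq_ite_of_mul_prod_sub_eq_one hb' t)

theorem block_vandermonde_syzygy_general
    (F : Type*) [Field F] (l n : ℕ) (hn : 2 ≤ n)
    (A : Fin n → Matrix (Fin l) (Fin l) F)
    (hcomm : ∀ i j, A i * A j = A j * A i)
    (B : Fin n → Matrix (Fin l) (Fin l) F)
    (hB : ∀ i : Fin n,
      B i * (Finset.univ.erase i).noncommProd (fun j => A j - A i)
        (fun a _ b _ _ =>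
          Commute.sub_right (Commute.sub_left (hcomm a b) (hcomm i b))
            (Commute.sub_left (hcomm a i) (hcomm i i))) = 1) :
    ∀ t ≤ n - 2, ∑ i, A i ^ t * B i = 0 := by
  intro t ht
  obtain ⟨m, rfl⟩ : ∃ m, n = m + 1 := ⟨n - 1, by omega⟩
  have htm : t < m := by omega
  have h := sum_pow_mul_eq_ite_of_mul_noncommProd_sub_eq_one A B hcomm hB ⟨t, by omega⟩
  rwa [if_neg (Fin.ne_of_lt htm)] at h

/-- For pairwise commuting matrices `A_1,…,A_n` with invertible pairwise
differences, the matrices `B_i = (∏_{j≠i}(A_j - A_i))⁻¹` satisfy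
`∑_i A_i^t B_i = 0` for every `0 ≤ t ≤ n - 2`. -/
theorem block_vandermonde_syzygy
    (F : Type*) [Field F] (l n : ℕ) (hn : 2 ≤ n)
    (A : Fin n → Matrix (Fin l) (Fin l) F)
    (hcomm : ∀ i j, A i * A j = A j * A i)
    (hdiff : ∀ i j, i ≠ j → IsUnit (A i - A j))
    (B : Fin n → Matrix (Fin l) (Fin l) F)
    (hB : ∀ i : Fin n,
      B i * (Finset.univ.erase i).noncommProd (fun j => A j - A i)
        (fun a _ b _ _ =>
          Commute.sub_right (Commute.sub_left (hcomm a b) (hcomm i b))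
            (Commute.sub_left (hcomm a i) (hcomm i i))) = 1) :
    ∀ t ≤ n - 2, ∑ i, A i ^ t * B i = 0 :=
  block_vandermonde_syzygy_general F l n hn A hcomm B hB
end
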